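/- arXiv:1801.08050 — 7 statements merged into one kernel-verified Lean document; each statement's English description precedes it below -/
import Mathlib

section
/- Let G = H⟨a⟩ be a finite group where H is a normal abelian subgroup and the orders of a and H are coprime. Then the minimal right Engel sink of a in G equals the commutator subgroup [H, a]. -/
/-- Left-normed iterated commutator `[g, x, x, ..., x]` (`x` repeated `n` times),
where `[u,v] = u⁻¹v⁻¹uv`. -/
def rcomm {G : Type*} [Group G] (g x : G) : ℕ → G
  | 0 => g
  | n + 1 => (rcomm g x n)⁻¹ * x⁻¹ * (rcomm g x n) * x

/-- Left-normed iterated commutator `[x, g, g, ..., g]` (`g` repeated `n` times). -/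
def lcomm {G : Type*} [Group G] (x g : G) : ℕ → G
  | 0 => x
  | n + 1 => (lcomm x g n)⁻¹ * g⁻¹ * (lcomm x g n) * g

/-- `R` is a right Engel sink of `g`. -/
def IsRightEngelSink {G : Type*} [Group G] (R : Set G) (g : G) : Prop :=
  ∀ x : G, ∃ N : ℕ, ∀ n ≥ N, rcomm g x n ∈ R

/-- `L` is a left Engel sink of `g`. -/
def IsLeftEngelSink {G : Type*} [Group G] (L : Set G) (g : G) : Prop :=
  ∀ x : G, ∃ N : ℕ, ∀ n ≥ N, lcomm x g n ∈ L

/-- `R` is the minimal right Engel sink of `g`. -/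
def IsMinRightEngelSink {G : Type*} [Group G] (R : Set G) (g : G) : Prop :=
  IsRightEngelSink R g ∧ ∀ S : Set G, IsRightEngelSink S g → R ⊆ S

/-- `L` is the minimal left Engel sink of `g`. -/
def IsMinLeftEngelSink {G : Type*} [Group G] (L : Set G) (g : G) : Prop :=
  IsLeftEngelSink L g ∧ ∀ S : Set G, IsLeftEngelSink S g → L ⊆ S

/-- `[H, a]`: the subgroup generated by all `h⁻¹ * h^a` with `h ∈ H`. -/
def commSub {G : Type*} [Group G] (H : Subgroup G) (a : G) : Subgroup G :=
  Subgroup.closure {z : G | ∃ h ∈ H, z = h⁻¹ * (a⁻¹ * h * a)}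

/-- A group is hypercentral iff its transfinite upper central series reaches the
whole group; equivalently, every proper quotient has nontrivial center,
which is the formulation used here. -/
def IsHypercentral (G : Type*) [Group G] : Prop :=
  ∀ N : Subgroup G, N.Normal → N ≠ ⊤ → ∃ g, g ∉ N ∧ ∀ x : G, g⁻¹ * x⁻¹ * g * x ∈ N

namespace Stmt1Aux


variable {G : Type*} [Group G] {H : Subgroup G} {a : G}


theorem K_le_H (hN : H.Normal) : commSub H a ≤ H := by
  apply (Subgroup.closure_le _).2
  rintro z ⟨h, hh, rfl⟩
  exact mul_mem (inv_mem hh) (by simpa [mul_assoc] using hN.conj_mem h hh a⁻¹)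

theorem conj_a_mem (hN : H.Normal) {z : G} (hz : z ∈ commSub H a) :
    a⁻¹ * z * a ∈ commSub H a := by
  induction hz using Subgroup.closure_induction with
  | mem x hx =>
    obtain ⟨h, hh, rfl⟩ := hx
    exact Subgroup.subset_closure
      ⟨a⁻¹ * h * a, by simpa [mul_assoc] using hN.conj_mem h hh a⁻¹, by group⟩
  | one => simpa using one_mem _
  | mul x y hx hy ihx ihy =>
    rw [show a⁻¹ * (x * y) * a = (a⁻¹ * x * a) * (a⁻¹ * y * a) by group]
    exact mul_mem ihx ihy
  | inv x hx ihx =>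
    rw [show a⁻¹ * x⁻¹ * a = (a⁻¹ * x * a)⁻¹ by group]
    exact inv_mem ihx

theorem conj_a_inv_mem (hN : H.Normal) {z : G} (hz : z ∈ commSub H a) :
    a * z * a⁻¹ ∈ commSub H a := by
  induction hz using Subgroup.closure_induction with
  | mem x hx =>
    obtain ⟨h, hh, rfl⟩ := hx
    exact Subgroup.subset_closure
      ⟨a * h * a⁻¹, by simpa [mul_assoc] using hN.conj_mem h hh a, by group⟩
  | one => simpa using one_mem _
  | mul x y hx hy ihx ihy =>
    rw [show a * (x * y) * a⁻¹ = (a * x * a⁻¹) * (a * y * a⁻¹) by group]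
    exact mul_mem ihx ihy
  | inv x hx ihx =>
    rw [show a * x⁻¹ * a⁻¹ = (a * x * a⁻¹)⁻¹ by group]
    exact inv_mem ihx

theorem conj_zpow_mem (hN : H.Normal) {z : G} (hz : z ∈ commSub H a) :
    ∀ j : ℤ, (a ^ j)⁻¹ * z * a ^ j ∈ commSub H a := by
  intro j
  induction j using Int.induction_on with
  | zero => simpa using hz
  | succ j ih =>
    rw [show ((a ^ ((j : ℤ) + 1))⁻¹ * z * a ^ ((j : ℤ) + 1)) =
      a⁻¹ * ((a ^ (j : ℤ))⁻¹ * z * a ^ (j : ℤ)) * a by rw [zpow_add_one]; group]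
    exact conj_a_mem hN ih
  | pred j ih =>
    rw [show ((a ^ (-(j : ℤ) - 1))⁻¹ * z * a ^ (-(j : ℤ) - 1)) =
      a * ((a ^ (-(j : ℤ)))⁻¹ * z * a ^ (-(j : ℤ))) * a⁻¹ by rw [zpow_sub_one]; group]
    exact conj_a_inv_mem hN ih

theorem gen_phi_mem (hN : H.Normal) {u : G} (hu : u ∈ H) :
    ∀ j : ℤ, u⁻¹ * ((a ^ j)⁻¹ * u * a ^ j) ∈ commSub H a := by
  have hgen : ∀ v, v ∈ H → v⁻¹ * (a⁻¹ * v * a) ∈ commSub H a := fun v hv =>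
    Subgroup.subset_closure ⟨v, hv, rfl⟩
  intro j
  induction j using Int.induction_on with
  | zero => simpa using one_mem _
  | succ j ih =>
    rw [show u⁻¹ * ((a ^ ((j : ℤ) + 1))⁻¹ * u * a ^ ((j : ℤ) + 1)) =
      (u⁻¹ * ((a ^ (j : ℤ))⁻¹ * u * a ^ (j : ℤ))) *
        ((a ^ (j : ℤ))⁻¹ * (u⁻¹ * (a⁻¹ * u * a)) * a ^ (j : ℤ)) by
      rw [zpow_add_one]; group]
    exact mul_mem ih (conj_zpow_mem hN (hgen u hu) j)
  | pred j ih =>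
    rw [show u⁻¹ * ((a ^ (-(j : ℤ) - 1))⁻¹ * u * a ^ (-(j : ℤ) - 1)) =
      (u⁻¹ * ((a ^ (-(j : ℤ)))⁻¹ * u * a ^ (-(j : ℤ)))) *
        ((a ^ (-(j : ℤ) - 1))⁻¹ * (u⁻¹ * (a⁻¹ * u * a))⁻¹ * a ^ (-(j : ℤ) - 1)) by
      rw [zpow_sub_one]; group]
    exact mul_mem ih (conj_zpow_mem hN (inv_mem (hgen u hu)) _)

theorem decomp (hN : H.Normal) (hgen : H ⊔ Subgroup.zpowers a = ⊤) (x : G) :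
    ∃ h ∈ H, ∃ j : ℤ, x = h * a ^ j := by
  haveI := hN
  have hx : x ∈ (↑(H ⊔ Subgroup.zpowers a) : Set G) := by rw [hgen]; trivial
  rw [Subgroup.normal_mul] at hx
  obtain ⟨h, hh, y, hy, hxy⟩ := hx
  obtain ⟨j, hj⟩ := Subgroup.mem_zpowers_iff.mp hy
  exact ⟨h, hh, j, by rw [← hxy, ← hj]⟩

theorem step_eq (hab : ∀ h₁ ∈ H, ∀ h₂ ∈ H, h₁ * h₂ = h₂ * h₁)
    {u h : G} (hu : u ∈ H) (hh : h ∈ H) (j : ℤ) :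
    u⁻¹ * (h * a ^ j)⁻¹ * u * (h * a ^ j) = u⁻¹ * ((a ^ j)⁻¹ * u * a ^ j) := by
  have hc : h⁻¹ * u * h = u := by rw [mul_assoc, hab u hu h hh]; group
  calc u⁻¹ * (h * a ^ j)⁻¹ * u * (h * a ^ j)
      = u⁻¹ * ((a ^ j)⁻¹ * (h⁻¹ * u * h) * a ^ j) := by group
    _ = u⁻¹ * ((a ^ j)⁻¹ * u * a ^ j) := by rw [hc]

theorem stepK (hN : H.Normal) (hab : ∀ h₁ ∈ H, ∀ h₂ ∈ H, h₁ * h₂ = h₂ * h₁)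
    (hgen : H ⊔ Subgroup.zpowers a = ⊤) {u : G} (hu : u ∈ H) (x : G) :
    u⁻¹ * x⁻¹ * u * x ∈ commSub H a := by
  obtain ⟨h, hh, j, rfl⟩ := decomp hN hgen x
  rw [step_eq hab hu hh j]
  exact gen_phi_mem hN hu j

theorem rcomm_one_mem_H (hN : H.Normal) (hgen : H ⊔ Subgroup.zpowers a = ⊤) (x : G) :
    rcomm a x 1 ∈ H := by
  obtain ⟨h, hh, j, rfl⟩ := decomp hN hgen x
  show a⁻¹ * (h * a ^ j)⁻¹ * a * (h * a ^ j) ∈ H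
  rw [show a⁻¹ * (h * a ^ j)⁻¹ * a * (h * a ^ j)
      = (a ^ j)⁻¹ * ((a⁻¹ * h⁻¹ * a) * h) * a ^ j by group]
  have h1 : a⁻¹ * h⁻¹ * a ∈ H := by simpa [mul_assoc] using hN.conj_mem h⁻¹ (inv_mem hh) a⁻¹
  simpa [mul_assoc] using hN.conj_mem _ (mul_mem h1 hh) (a ^ j)⁻¹

theorem rcomm_mem_H (hN : H.Normal) (hab : ∀ h₁ ∈ H, ∀ h₂ ∈ H, h₁ * h₂ = h₂ * h₁)
    (hgen : H ⊔ Subgroup.zpowers a = ⊤) (x : G) :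
    ∀ n, rcomm a x (n + 1) ∈ H := by
  intro n
  induction n with
  | zero => exact rcomm_one_mem_H hN hgen x
  | succ n ih => exact K_le_H hN (stepK hN hab hgen ih x)

theorem rcomm_mem_K (hN : H.Normal) (hab : ∀ h₁ ∈ H, ∀ h₂ ∈ H, h₁ * h₂ = h₂ * h₁)
    (hgen : H ⊔ Subgroup.zpowers a = ⊤) (x : G) (n : ℕ) :
    rcomm a x (n + 2) ∈ commSub H a :=
  stepK hN hab hgen (rcomm_mem_H hN hab hgen x n) x



/-- Norm-like map: `Nm a u n = u * σ(u) * σ²(u) * ⋯ * σⁿ⁻¹(u)` where `σ(v) = a⁻¹ v a`. -/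
def Nm {G : Type*} [Group G] (a u : G) : ℕ → G
  | 0 => 1
  | n + 1 => u * a⁻¹ * Nm a u n * a




theorem Nm_mem (hN : H.Normal) {u : G} (hu : u ∈ H) (n : ℕ) : Nm a u n ∈ H := by
  induction n with
  | zero => exact one_mem _
  | succ n ih =>
    show u * a⁻¹ * Nm a u n * a ∈ H
    have : a⁻¹ * Nm a u n * a ∈ H := by simpa [mul_assoc] using hN.conj_mem _ ih a⁻¹
    simpa [mul_assoc] using mul_mem hu this

theorem Nm_one (n : ℕ) : Nm a 1 n = 1 := by
  induction n with
  | zero => rfl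
  | succ n ih => show 1 * a⁻¹ * Nm a 1 n * a = 1; rw [ih]; group

theorem Nm_mul (hN : H.Normal) (hab : ∀ h₁ ∈ H, ∀ h₂ ∈ H, h₁ * h₂ = h₂ * h₁)
    {u v : G} (hu : u ∈ H) (hv : v ∈ H) (n : ℕ) :
    Nm a (u * v) n = Nm a u n * Nm a v n := by
  induction n with
  | zero => simp [Nm]
  | succ n ih =>
    show u * v * a⁻¹ * Nm a (u * v) n * a = (u * a⁻¹ * Nm a u n * a) * (v * a⁻¹ * Nm a v n * a)
    rw [ih]
    have hm : a⁻¹ * Nm a u n * a ∈ H := by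
      simpa [mul_assoc] using hN.conj_mem _ (Nm_mem hN hu n) a⁻¹
    have c : v * (a⁻¹ * Nm a u n * a) = (a⁻¹ * Nm a u n * a) * v := hab v hv _ hm
    rw [show u * v * a⁻¹ * (Nm a u n * Nm a v n) * a
        = u * (v * (a⁻¹ * Nm a u n * a)) * (a⁻¹ * Nm a v n * a) by group, c]
    group

theorem Nm_inv (hN : H.Normal) (hab : ∀ h₁ ∈ H, ∀ h₂ ∈ H, h₁ * h₂ = h₂ * h₁)
    {u : G} (hu : u ∈ H) (n : ℕ) : Nm a u⁻¹ n = (Nm a u n)⁻¹ := by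
  induction n with
  | zero => simp [Nm]
  | succ n ih =>
    show u⁻¹ * a⁻¹ * Nm a u⁻¹ n * a = (u * a⁻¹ * Nm a u n * a)⁻¹
    rw [ih]
    have hm : a⁻¹ * Nm a u n * a ∈ H := by
      simpa [mul_assoc] using hN.conj_mem _ (Nm_mem hN hu n) a⁻¹
    have c : u * (a⁻¹ * Nm a u n * a) = (a⁻¹ * Nm a u n * a) * u := hab u hu _ hm
    rw [show u⁻¹ * a⁻¹ * (Nm a u n)⁻¹ * a = u⁻¹ * (a⁻¹ * Nm a u n * a)⁻¹ by group,
      show (u * a⁻¹ * Nm a u n * a)⁻¹ = (u * (a⁻¹ * Nm a u n * a))⁻¹ by group, c]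
    group

/-- `σ(Nm n u) = u⁻¹ * Nm n u * σⁿ(u)`. -/
theorem Nm_shift (u : G) (n : ℕ) :
    a⁻¹ * Nm a u n * a = u⁻¹ * Nm a u n * ((a ^ n)⁻¹ * u * a ^ n) := by
  induction n with
  | zero => simp [Nm]
  | succ n ih =>
    show a⁻¹ * (u * a⁻¹ * Nm a u n * a) * a
        = u⁻¹ * (u * a⁻¹ * Nm a u n * a) * ((a ^ (n + 1))⁻¹ * u * a ^ (n + 1))
    rw [show a⁻¹ * (u * a⁻¹ * Nm a u n * a) * a
        = (a⁻¹ * u * a) * (a⁻¹ * (a⁻¹ * Nm a u n * a) * a) by group, ih]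
    rw [pow_succ]
    group

/-- `Nm` of a `σ`-conjugate. -/
theorem Nm_conj (h : G) (n : ℕ) : Nm a (a⁻¹ * h * a) n = a⁻¹ * Nm a h n * a := by
  induction n with
  | zero => simp [Nm]
  | succ n ih =>
    show a⁻¹ * h * a * a⁻¹ * Nm a (a⁻¹ * h * a) n * a = a⁻¹ * (h * a⁻¹ * Nm a h n * a) * a
    rw [ih]; group

theorem Nm_fixed {u : G} (hfix : a⁻¹ * u * a = u) (n : ℕ) : Nm a u n = u ^ n := by
  have hc : Commute a u := by
    have : u * a = a * u := by
      calc u * a = a * (a⁻¹ * u * a) := by group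
        _ = a * u := by rw [hfix]
    exact (this).symm
  induction n with
  | zero => simp [Nm]
  | succ n ih =>
    show u * a⁻¹ * Nm a u n * a = u ^ (n + 1)
    rw [ih, pow_succ']
    have := (hc.pow_right n).eq
    calc u * a⁻¹ * u ^ n * a = u * (a⁻¹ * (u ^ n * a)) := by group
      _ = u * (a⁻¹ * (a * u ^ n)) := by rw [← this]
      _ = u * u ^ n := by group

theorem Nm_K (hN : H.Normal) (hab : ∀ h₁ ∈ H, ∀ h₂ ∈ H, h₁ * h₂ = h₂ * h₁)
    (ha : a ^ orderOf a = 1) {z : G} (hz : z ∈ commSub H a) :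
    Nm a z (orderOf a) = 1 := by
  set m := orderOf a with hm
  have main : z ∈ H ∧ Nm a z m = 1 := by
    induction hz using Subgroup.closure_induction with
    | mem x hx =>
      obtain ⟨h, hh, rfl⟩ := hx
      have hconj : a⁻¹ * h * a ∈ H := by simpa [mul_assoc] using hN.conj_mem h hh a⁻¹
      constructor
      · exact mul_mem (inv_mem hh) hconj
      · rw [Nm_mul hN hab (inv_mem hh) hconj, Nm_inv hN hab hh, Nm_conj,
          Nm_shift h m, ha]
        have hc : h * Nm a h m = Nm a h m * h := hab h hh _ (Nm_mem hN hh m)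
        rw [show h⁻¹ * Nm a h m * ((1:G)⁻¹ * h * 1) = h⁻¹ * (Nm a h m * h) by group, ← hc]
        group
    | one => exact ⟨one_mem _, Nm_one m⟩
    | mul x y hx hy ihx ihy =>
      exact ⟨mul_mem ihx.1 ihy.1, by
        rw [Nm_mul hN hab ihx.1 ihy.1, ihx.2, ihy.2, one_mul]⟩
    | inv x hx ihx =>
      exact ⟨inv_mem ihx.1, by rw [Nm_inv hN hab ihx.1, ihx.2, inv_one]⟩
  exact main.2

theorem fixed_eq_one [Finite G] (hN : H.Normal)
    (hab : ∀ h₁ ∈ H, ∀ h₂ ∈ H, h₁ * h₂ = h₂ * h₁)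
    (hcop : Nat.Coprime (orderOf a) (Nat.card H))
    {z : G} (hz : z ∈ commSub H a) (hfix : a⁻¹ * z * a = z) : z = 1 := by
  have h1 : z ^ orderOf a = 1 := by
    rw [← Nm_fixed hfix (orderOf a)]
    exact Nm_K hN hab (pow_orderOf_eq_one a) hz
  have h2 : orderOf z ∣ orderOf a := orderOf_dvd_of_pow_eq_one h1
  have h3 : orderOf z ∣ Nat.card H := Subgroup.orderOf_dvd_natCard H (K_le_H hN hz)
  have h4 : orderOf z ∣ 1 := hcop ▸ Nat.dvd_gcd h2 h3
  rw [orderOf_eq_one_iff.mp (Nat.dvd_one.mp h4)]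


theorem rcomm_succ (g x : G) (n : ℕ) :
    rcomm g x (n + 1) = (rcomm g x n)⁻¹ * x⁻¹ * rcomm g x n * x := rfl

end Stmt1Aux

open Stmt1Aux in
theorem stmt1 {G : Type*} [Group G] [Finite G] (H : Subgroup G) (hN : H.Normal)
    (hab : ∀ h₁ ∈ H, ∀ h₂ ∈ H, h₁ * h₂ = h₂ * h₁)
    (a : G) (hgen : H ⊔ Subgroup.zpowers a = ⊤)
    (hcop : Nat.Coprime (orderOf a) (Nat.card H))
    (R : Set G) (hR : IsMinRightEngelSink R a) :
    R = (commSub H a : Set G) := by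
  apply Set.Subset.antisymm
  · exact hR.2 _ fun x => ⟨2, fun n hn => by
      obtain ⟨m, rfl⟩ : ∃ m, n = m + 2 := ⟨n - 2, by omega⟩
      exact rcomm_mem_K hN hab hgen x m⟩
  · intro k hk
    have hk' : k ∈ commSub H a := hk
    set K := commSub H a with hK
    set ψ : K → K := fun u =>
      ⟨(↑u)⁻¹ * (a⁻¹ * ↑u * a), mul_mem (inv_mem u.2) (conj_a_mem hN u.2)⟩ with hψ
    have hψval : ∀ u : K, (↑(ψ u) : G) = (↑u)⁻¹ * (a⁻¹ * ↑u * a) := fun u => rfl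
    have hinj : Function.Injective ψ := by
      intro u v huv
      have e : (↑u : G)⁻¹ * (a⁻¹ * ↑u * a) = (↑v : G)⁻¹ * (a⁻¹ * ↑v * a) := by
        have := congrArg Subtype.val huv
        simpa [hψval] using this
      have e2 : a⁻¹ * (↑u * (↑v)⁻¹) * a = (↑u : G) * (↑v)⁻¹ := by
        calc a⁻¹ * ((↑u : G) * (↑v)⁻¹) * a
            = ↑u * ((↑u : G)⁻¹ * (a⁻¹ * ↑u * a)) * ((↑v : G)⁻¹ * (a⁻¹ * ↑v * a))⁻¹ * (↑v)⁻¹ := by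
              group
          _ = (↑u : G) * (↑v)⁻¹ := by rw [e]; group
      have h1 : ((↑u : G) * (↑v)⁻¹) = 1 :=
        fixed_eq_one hN hab hcop (mul_mem u.2 (inv_mem v.2)) e2
      exact Subtype.ext (mul_inv_eq_one.mp h1)
    have hsurj : Function.Surjective ψ := Finite.injective_iff_surjective.mp hinj
    obtain ⟨d, hd⟩ := hsurj (⟨k, hk'⟩ : K)⁻¹
    have hd' : ((↑d : G))⁻¹ * (a⁻¹ * ↑d * a) = k⁻¹ := by
      have := congrArg Subtype.val hd
      simpa [hψval] using this
    set x := a * (↑d : G) with hx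
    have hdH : (↑d : G) ∈ H := K_le_H hN d.2
    have C1 : rcomm a x 1 = k := by
      apply inv_injective
      rw [rcomm_succ]
      show ((rcomm a x 0)⁻¹ * x⁻¹ * rcomm a x 0 * x)⁻¹ = k⁻¹
      rw [show rcomm a x 0 = a from rfl, ← hd', hx]
      group
    have C2 : ∀ n, rcomm a x (n + 1) = ↑(ψ^[n] (⟨k, hk'⟩ : K)) := by
      intro n
      induction n with
      | zero => simpa using C1
      | succ n ih =>
        rw [Function.iterate_succ_apply']
        set w := ψ^[n] (⟨k, hk'⟩ : K) with hw
        have hwH : (↑w : G) ∈ H := K_le_H hN w.2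
        have hcw : a⁻¹ * (↑w : G) * a ∈ H := by
          simpa [mul_assoc] using hN.conj_mem _ hwH a⁻¹
        have c : (↑d : G) * (a⁻¹ * ↑w * a) = (a⁻¹ * (↑w : G) * a) * ↑d := hab _ hdH _ hcw
        rw [rcomm_succ, ih, hψval]
        calc (↑w : G)⁻¹ * x⁻¹ * ↑w * x
            = (↑w : G)⁻¹ * ((↑d)⁻¹ * ((a⁻¹ * ↑w * a) * ↑d)) := by rw [hx]; group
          _ = (↑w : G)⁻¹ * ((↑d)⁻¹ * (↑d * (a⁻¹ * ↑w * a))) := by rw [← c]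
          _ = (↑w : G)⁻¹ * (a⁻¹ * ↑w * a) := by group
    obtain ⟨i, j, hij, hs⟩ :=
      Finite.exists_ne_map_eq_of_infinite (fun n => ψ^[n] (⟨k, hk'⟩ : K))
    have key : ∃ p, 0 < p ∧ ψ^[p] (⟨k, hk'⟩ : K) = ⟨k, hk'⟩ := by
      rcases Nat.lt_or_ge i j with hlt | hge
      · refine ⟨j - i, by omega, hinj.iterate i ?_⟩
        rw [← Function.iterate_add_apply, show i + (j - i) = j by omega]
        exact hs.symm
      · have hlt : j < i := by omega
        refine ⟨i - j, by omega, hinj.iterate j ?_⟩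
        rw [← Function.iterate_add_apply, show j + (i - j) = i by omega]
        exact hs
    obtain ⟨p, hp, hfix⟩ := key
    obtain ⟨N, hNs⟩ := hR.1 x
    have hiter : ψ^[p * N] (⟨k, hk'⟩ : K) = ⟨k, hk'⟩ := by
      rw [Function.iterate_mul]
      exact Function.iterate_fixed hfix N
    have hval : rcomm a x (p * N + 1) = k := by rw [C2, hiter]
    have hge : p * N + 1 ≥ N := by
      have := Nat.le_mul_of_pos_left N hp
      omega
    have := hNs (p * N + 1) hge
    rwa [hval] at this
end

section
/- Let G = H⟨a⟩ be a group with H a normal abelian subgroup. Then a is an almost right Engel element if and only if a is an almost left Engel element, and in that case the minimal right Engel sink R(a) equals the minimal left Engel sink L(a). -/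
open Filter Function

namespace AlmostEngel

section Dynamics

variable {α : Type*} {f : α → α} {x y : α}

theorem eventually_atTop_of_add {p : ℕ → Prop} (k : ℕ) (h : ∀ᶠ n in atTop, p (n + k)) :
    ∀ᶠ n in atTop, p n := by
  rwa [← map_add_atTop_eq_nat k, eventually_map]

theorem mem_periodicPts_of_frequently_iterate_eq (h : ∃ᶠ n in atTop, f^[n] x = y) :
    y ∈ periodicPts f := by
  obtain ⟨n₀, rfl⟩ := h.exists
  obtain ⟨n₁, hn₁, hlt⟩ := (h.and_eventually (eventually_gt_atTop n₀)).exists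
  refine mk_mem_periodicPts (Nat.sub_pos_of_lt hlt) ?_
  rw [IsPeriodicPt, IsFixedPt, ← iterate_add_apply, Nat.sub_add_cancel hlt.le, hn₁]

theorem frequently_iterate_eq_self (hy : y ∈ periodicPts f) : ∃ᶠ n in atTop, f^[n] y = y := by
  obtain ⟨m, hm, hper⟩ := hy
  exact frequently_atTop.2 fun N => ⟨N * m, Nat.le_mul_of_pos_right N hm, hper.const_mul N⟩

theorem eventually_frequently_eq_of_finite {s : ℕ → α} {F : Set α} (hF : F.Finite)
    (hs : ∀ᶠ n in atTop, s n ∈ F) : ∀ᶠ n in atTop, ∃ᶠ m in atTop, s m = s n := by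
  have hrare : ∀ᶠ n in atTop, ∀ y ∈ F, (∃ᶠ m in atTop, s m = y) ∨ s n ≠ y := by
    refine (eventually_all_finite hF).2 fun y _ => ?_
    by_cases hy : ∃ᶠ m in atTop, s m = y
    · exact .of_forall fun _ => .inl hy
    · exact (not_frequently.1 hy).mono fun _ => .inr
  filter_upwards [hrare, hs] with n hn hnF
  exact (hn _ hnF).resolve_right (not_not.2 rfl)

theorem subset_frequently_eq_of_minimal {ι : Type*} {s : ι → ℕ → α} {F : Set α}
    (hF : ∀ i, ∀ᶠ n in atTop, s i n ∈ F)
    (hmin : ∀ T : Set α, (∀ i, ∀ᶠ n in atTop, s i n ∈ T) → F ⊆ T) :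
    F ⊆ {y | ∃ i, ∃ᶠ n in atTop, s i n = y} := by
  intro p hp
  by_contra hrare
  exact (hmin (F \ {p}) (fun i => (hF i).and (not_frequently.1 fun h => hrare ⟨i, h⟩)) hp).2 rfl

end Dynamics

variable {G : Type*} [Group G]

def commBy (x y : G) : G := y⁻¹ * x⁻¹ * y * x

theorem lcomm_eq_iterate (x g : G) : ∀ n, lcomm x g n = (commBy g)^[n] x
  | 0 => rfl
  | n + 1 => by rw [iterate_succ_apply', ← lcomm_eq_iterate x g n]; rfl

theorem rcomm_eq_iterate (g x : G) : ∀ n, rcomm g x n = (commBy x)^[n] g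
  | 0 => rfl
  | n + 1 => by rw [iterate_succ_apply', ← rcomm_eq_iterate g x n]; rfl

theorem isLeftEngelSink_iff {L : Set G} {g : G} :
    IsLeftEngelSink L g ↔ ∀ x, ∀ᶠ n in atTop, (commBy g)^[n] x ∈ L := by
  simp only [IsLeftEngelSink, lcomm_eq_iterate, eventually_atTop]

theorem isRightEngelSink_iff {R : Set G} {g : G} :
    IsRightEngelSink R g ↔ ∀ x, ∀ᶠ n in atTop, (commBy x)^[n] g ∈ R := by
  simp only [IsRightEngelSink, rcomm_eq_iterate, eventually_atTop]

section Identities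

variable {a c x y : G}

theorem commBy_swap (x y : G) : commBy x y = (commBy y x)⁻¹ := by
  simp only [commBy]; group

theorem commBy_mul (c d y : G) : commBy (c * d) y = commBy d y * (d⁻¹ * commBy c y * d) := by
  simp only [commBy]; group

theorem commBy_inv (c y : G) : commBy c⁻¹ y = c * (commBy c y)⁻¹ * c⁻¹ := by
  simp only [commBy]; group

theorem commBy_apply_mul_left_of_commute (h : Commute a c) (y : G) :
    commBy a (c * y) = commBy a y := by
  have hc : c⁻¹ * a⁻¹ * c = a⁻¹ := by rw [mul_assoc, h.inv_left.eq, inv_mul_cancel_left]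
  calc commBy a (c * y) = y⁻¹ * (c⁻¹ * a⁻¹ * c) * y * a := by simp only [commBy]; group
    _ = commBy a y := by rw [hc]; rfl

theorem commBy_apply_conj_of_commute (h : Commute a c) (y : G) :
    commBy a (c * y * c⁻¹) = c * commBy a y * c⁻¹ := by
  have hc : c⁻¹ * a⁻¹ * c = a⁻¹ := by rw [mul_assoc, h.inv_left.eq, inv_mul_cancel_left]
  have hc' : c⁻¹ * a = a * c⁻¹ := h.inv_right.eq.symm
  calc commBy a (c * y * c⁻¹) = c * y⁻¹ * (c⁻¹ * a⁻¹ * c) * y * (c⁻¹ * a) := by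
        simp only [commBy]; group
    _ = c * commBy a y * c⁻¹ := by rw [hc, hc']; simp only [commBy]; group

theorem commBy_zpow_mem {V : Subgroup G} (ha : a ∈ Subgroup.normalizer (V : Set G))
    (hv : commBy a y ∈ V) (k : ℤ) : commBy (a ^ k) y ∈ V := by
  induction k using Int.induction_on with
  | zero => simp [commBy]
  | succ k ih =>
    rw [zpow_add_one, commBy_mul]
    exact mul_mem hv ((Subgroup.mem_normalizer_iff''.1 ha _).1 ih)
  | pred k ih =>
    rw [zpow_sub_one, commBy_mul, commBy_inv, inv_inv]
    exact mul_mem ((Subgroup.mem_normalizer_iff.1 ha _).1 (inv_mem hv))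
      ((Subgroup.mem_normalizer_iff.1 ha _).1 ih)

end Identities

section NormalAbelian

variable {H : Subgroup G} [H.Normal] {a u v w x y : G}

theorem commBy_mem (x : G) (hy : y ∈ H) : commBy x y ∈ H := by
  simpa only [commBy, mul_assoc] using mul_mem (inv_mem hy) (‹H.Normal›.conj_mem' y hy x)

theorem mapsTo_commBy (x : G) : Set.MapsTo (commBy x) H H := fun _ hy => commBy_mem x hy

theorem exists_zpow_mul_eq (hG : H ⊔ Subgroup.zpowers a = ⊤) (x : G) :
    ∃ k : ℤ, ∃ u ∈ H, a ^ k * u = x := by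
  have hx : x ∈ ((Subgroup.zpowers a ⊔ H : Subgroup G) : Set G) := by
    rw [sup_comm, hG]; trivial
  rw [Subgroup.mul_normal] at hx
  obtain ⟨_, hk, u, hu, rfl⟩ := hx
  obtain ⟨k, rfl⟩ := Subgroup.mem_zpowers_iff.1 hk
  exact ⟨k, u, hu, rfl⟩

theorem commBy_mem_of_sup_eq_top (hG : H ⊔ Subgroup.zpowers a = ⊤) (x : G) :
    commBy a x ∈ H := by
  obtain ⟨k, u, hu, rfl⟩ := exists_zpow_mul_eq hG x
  rw [commBy_apply_mul_left_of_commute ((Commute.refl a).zpow_right k)]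
  exact commBy_mem a hu

variable [IsMulCommutative H]

theorem commBy_mul_right_of_mem (hu : u ∈ H) (hy : y ∈ H) : commBy (x * u) y = commBy x y :=
  calc commBy (x * u) y = y⁻¹ * u⁻¹ * (x⁻¹ * y * x) * u := by simp only [commBy]; group
    _ = u⁻¹ * commBy x y * u := by
        rw [setLike_mul_comm (inv_mem hy) (inv_mem hu)]; simp only [commBy]; group
    _ = commBy x y := by
        rw [mul_assoc, setLike_mul_comm (commBy_mem x hy) hu, inv_mul_cancel_left]

theorem commBy_mul_inv_self_left (hu : u ∈ H) : commBy (a * u⁻¹) a = commBy a u :=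
  calc commBy (a * u⁻¹) a = (a⁻¹ * u * a) * u⁻¹ := by simp only [commBy]; group
    _ = commBy a u := by
        rw [setLike_mul_comm (‹H.Normal›.conj_mem' u hu a) (inv_mem hu)]
        simp only [commBy]; group

theorem commBy_apply_mul_of_mem (x : G) (hu : u ∈ H) (hv : v ∈ H) :
    commBy x (u * v) = commBy x u * commBy x v :=
  calc commBy x (u * v) = v⁻¹ * commBy x u * (x⁻¹ * v * x) := by simp only [commBy]; group
    _ = commBy x u * commBy x v := by
        rw [setLike_mul_comm (inv_mem hv) (commBy_mem x hu)]; simp only [commBy]; group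

theorem commBy_apply_inv_of_mem (x : G) (hu : u ∈ H) : commBy x u⁻¹ = (commBy x u)⁻¹ :=
  calc commBy x u⁻¹ = u * (x⁻¹ * u⁻¹ * x) := by simp only [commBy]; group
    _ = (commBy x u)⁻¹ := by
        rw [setLike_mul_comm hu (‹H.Normal›.conj_mem' _ (inv_mem hu) x)]
        simp only [commBy]; group

theorem commBy_comm_of_commute {b c : G} (hbc : Commute b c) (hw : w ∈ H) :
    commBy b (commBy c w) = commBy c (commBy b w) := by
  have hb := ‹H.Normal›.conj_mem' _ (inv_mem hw) b
  have hc := ‹H.Normal›.conj_mem' _ (inv_mem hw) c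
  calc commBy b (commBy c w)
        = c⁻¹ * w⁻¹ * c * w * (b⁻¹ * w⁻¹ * b) * ((b * c)⁻¹ * w * (b * c)) := by
          rw [hbc.eq]; simp only [commBy]; group
    _ = b⁻¹ * w⁻¹ * b * w * (c⁻¹ * w⁻¹ * c) * ((b * c)⁻¹ * w * (b * c)) := by
          rw [setLike_mul_comm (mul_mem hc hw) hb, setLike_mul_comm hc hw]; simp only [mul_assoc]
    _ = commBy c (commBy b w) := by simp only [commBy]; group

theorem iterate_commBy_mul_right_of_mem (hu : u ∈ H) (hw : w ∈ H) (n : ℕ) :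
    (commBy (x * u))^[n] w = (commBy x)^[n] w := by
  induction n with
  | zero => rfl
  | succ n ih =>
    rw [iterate_succ_apply', iterate_succ_apply', ih,
      commBy_mul_right_of_mem hu ((mapsTo_commBy x).iterate n hw)]

theorem iterate_commBy_apply_mul_of_mem (hu : u ∈ H) (hv : v ∈ H) (n : ℕ) :
    (commBy x)^[n] (u * v) = (commBy x)^[n] u * (commBy x)^[n] v := by
  induction n with
  | zero => rfl
  | succ n ih =>
    rw [iterate_succ_apply', iterate_succ_apply', iterate_succ_apply', ih, commBy_apply_mul_of_mem x
      ((mapsTo_commBy x).iterate n hu) ((mapsTo_commBy x).iterate n hv)]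

theorem iterate_commBy_apply_inv_of_mem (hu : u ∈ H) (n : ℕ) :
    (commBy x)^[n] u⁻¹ = ((commBy x)^[n] u)⁻¹ := by
  induction n with
  | zero => rfl
  | succ n ih =>
    rw [iterate_succ_apply', iterate_succ_apply', ih,
      commBy_apply_inv_of_mem x ((mapsTo_commBy x).iterate n hu)]

theorem iterate_commBy_comm_of_commute {c : G} (hac : Commute a c) (hw : w ∈ H) (n : ℕ) :
    (commBy a)^[n] (commBy c w) = commBy c ((commBy a)^[n] w) := by
  induction n with
  | zero => rfl
  | succ n ih =>
    rw [iterate_succ_apply', iterate_succ_apply', ih,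
      commBy_comm_of_commute hac ((mapsTo_commBy a).iterate n hw)]

theorem iterate_commBy_zpow_mem {V : Subgroup G} (ha : a ∈ Subgroup.normalizer (V : Set G))
    (k : ℤ) {n : ℕ} (hw : w ∈ H) (hn : (commBy a)^[n] w ∈ V) : (commBy (a ^ k))^[n] w ∈ V := by
  induction n generalizing w with
  | zero => exact hn
  | succ n ih =>
    rw [iterate_succ_apply]
    refine ih (commBy_mem _ hw) ?_
    rw [iterate_commBy_comm_of_commute ((Commute.refl a).zpow_right k) hw]
    exact commBy_zpow_mem ha (by rwa [← iterate_succ_apply' (commBy a)]) k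

variable (H a) in
def periodicSubgroup : Subgroup G where
  carrier := {y | y ∈ H ∧ y ∈ periodicPts (commBy a)}
  one_mem' :=
    ⟨H.one_mem, mk_mem_periodicPts one_pos (by simp [IsPeriodicPt, IsFixedPt, commBy])⟩
  mul_mem' := by
    rintro u v ⟨hu, m, hm, hpu⟩ ⟨hv, m', hm', hpv⟩
    refine ⟨mul_mem hu hv, mk_mem_periodicPts (Nat.mul_pos hm hm') ?_⟩
    rw [IsPeriodicPt, IsFixedPt, iterate_commBy_apply_mul_of_mem hu hv, (hpu.mul_const m').eq,
      (hpv.const_mul m).eq]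
  inv_mem' := by
    rintro u ⟨hu, m, hm, hpu⟩
    refine ⟨inv_mem hu, mk_mem_periodicPts hm ?_⟩
    rw [IsPeriodicPt, IsFixedPt, iterate_commBy_apply_inv_of_mem hu, hpu.eq]

theorem conj_mem_periodicSubgroup {c : G} (hc : Commute a c) (hy : y ∈ periodicSubgroup H a) :
    c * y * c⁻¹ ∈ periodicSubgroup H a := by
  obtain ⟨hyH, m, hm, hpy⟩ := hy
  exact ⟨‹H.Normal›.conj_mem y hyH c,
    mk_mem_periodicPts hm (hpy.map (g := fun z => c * z * c⁻¹) fun z =>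
      (commBy_apply_conj_of_commute hc z).symm)⟩

theorem mem_normalizer_periodicSubgroup :
    a ∈ Subgroup.normalizer (periodicSubgroup H a : Set G) :=
  Subgroup.mem_normalizer_iff.2 fun y =>
    ⟨conj_mem_periodicSubgroup (Commute.refl a), fun h => by
      simpa [mul_assoc] using conj_mem_periodicSubgroup (Commute.refl a).inv_right h⟩

theorem mem_periodicSubgroup_of_frequently (hG : H ⊔ Subgroup.zpowers a = ⊤)
    (h : ∃ᶠ n in atTop, (commBy a)^[n] x = y) : y ∈ periodicSubgroup H a := by
  refine ⟨?_, mem_periodicPts_of_frequently_iterate_eq h⟩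
  obtain ⟨n, rfl, hn⟩ := (h.and_eventually (eventually_gt_atTop 0)).exists
  obtain ⟨m, rfl⟩ := Nat.exists_eq_succ_of_ne_zero hn.ne'
  rw [iterate_succ_apply]
  exact (mapsTo_commBy a).iterate m (commBy_mem_of_sup_eq_top hG x)

theorem periodicSubgroup_subset_of_isLeftEngelSink {L : Set G} (hL : IsLeftEngelSink L a) :
    (periodicSubgroup H a : Set G) ⊆ L := fun y hy => by
  obtain ⟨n, hn, hny⟩ :=
    ((isLeftEngelSink_iff.1 hL y).and_frequently (frequently_iterate_eq_self hy.2)).exists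
  exact hny ▸ hn

theorem isLeftEngelSink_periodicSubgroup_of_finite (hG : H ⊔ Subgroup.zpowers a = ⊤)
    {L : Set G} (hL : IsLeftEngelSink L a) (hfin : L.Finite) :
    IsLeftEngelSink (periodicSubgroup H a : Set G) a :=
  isLeftEngelSink_iff.2 fun x => (eventually_frequently_eq_of_finite hfin
    (isLeftEngelSink_iff.1 hL x)).mono fun _ hn => mem_periodicSubgroup_of_frequently hG hn

theorem _root_.IsMinLeftEngelSink.subset_periodicSubgroup (hG : H ⊔ Subgroup.zpowers a = ⊤)
    {L : Set G} (hL : IsMinLeftEngelSink L a) : L ⊆ periodicSubgroup H a :=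
  (subset_frequently_eq_of_minimal (isLeftEngelSink_iff.1 hL.1) fun T hT =>
    hL.2 T (isLeftEngelSink_iff.2 hT)).trans fun _ ⟨_, hx⟩ =>
      mem_periodicSubgroup_of_frequently hG hx

theorem _root_.IsRightEngelSink.isLeftEngelSink (hG : H ⊔ Subgroup.zpowers a = ⊤) {R : Set G}
    (hR : IsRightEngelSink R a) : IsLeftEngelSink R a := by
  refine isLeftEngelSink_iff.2 fun x => eventually_atTop_of_add 2 ?_
  have hx := commBy_mem_of_sup_eq_top hG x
  have hshift : ∀ n, (commBy (a * (commBy a x)⁻¹))^[n + 1] a = (commBy a)^[n + 2] x := by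
    intro n
    rw [iterate_succ_apply, commBy_mul_inv_self_left hx,
      iterate_commBy_mul_right_of_mem (inv_mem hx) (commBy_mem a hx), iterate_add_apply]
    rfl
  exact ((tendsto_add_atTop_nat 1).eventually (isRightEngelSink_iff.1 hR _)).mono
    fun n hn => hshift n ▸ hn

theorem isRightEngelSink_of_isLeftEngelSink (hG : H ⊔ Subgroup.zpowers a = ⊤)
    {V : Subgroup G} (hV : IsLeftEngelSink (V : Set G) a)
    (ha : a ∈ Subgroup.normalizer (V : Set G)) : IsRightEngelSink (V : Set G) a := by
  refine isRightEngelSink_iff.2 fun x => eventually_atTop_of_add 1 ?_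
  obtain ⟨k, u, hu, rfl⟩ := exists_zpow_mul_eq hG x
  have hw : commBy (a ^ k * u) a ∈ H := by
    rw [commBy_swap]; exact inv_mem (commBy_mem_of_sup_eq_top hG _)
  filter_upwards [isLeftEngelSink_iff.1 hV (commBy (a ^ k * u) a)] with n hn
  rw [iterate_succ_apply, iterate_commBy_mul_right_of_mem hu hw]
  exact iterate_commBy_zpow_mem ha k hw hn

end NormalAbelian

end AlmostEngel

open AlmostEngel

theorem stmt7 {G : Type*} [Group G] (H : Subgroup G) (hN : H.Normal)
    (hab : ∀ h₁ ∈ H, ∀ h₂ ∈ H, h₁ * h₂ = h₂ * h₁)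
    (a : G) (hgen : H ⊔ Subgroup.zpowers a = ⊤) :
    ((∃ R : Set G, R.Finite ∧ IsRightEngelSink R a) ↔
        (∃ L : Set G, L.Finite ∧ IsLeftEngelSink L a)) ∧
      (∀ R L : Set G, IsMinRightEngelSink R a → IsMinLeftEngelSink L a → R = L) := by
  have : IsMulCommutative H := .of_setLike_mul_comm hab
  have hSa : a ∈ Subgroup.normalizer (periodicSubgroup H a : Set G) :=
    mem_normalizer_periodicSubgroup
  refine ⟨⟨fun ⟨R, hfin, hR⟩ => ⟨R, hfin, hR.isLeftEngelSink hgen⟩, fun ⟨L, hfin, hL⟩ => ?_⟩,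
    fun R L hR hL => ?_⟩
  · have hS := isLeftEngelSink_periodicSubgroup_of_finite hgen hL hfin
    exact ⟨_, hfin.subset (periodicSubgroup_subset_of_isLeftEngelSink hL),
      isRightEngelSink_of_isLeftEngelSink hgen hS hSa⟩
  · have hLS : L = periodicSubgroup H a :=
      (hL.subset_periodicSubgroup hgen).antisymm (periodicSubgroup_subset_of_isLeftEngelSink hL.1)
    have hS := isRightEngelSink_of_isLeftEngelSink hgen (hLS ▸ hL.1) hSa
    rw [hLS]
    exact (hR.2 _ hS).antisymm
      (periodicSubgroup_subset_of_isLeftEngelSink (hR.1.isLeftEngelSink hgen))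
end

section
/- Let G be a finite group and a ∈ G with gcd(|a|, |G : ⟨a⟩|) appropriately coprime — specifically, G = H⟨a⟩ with H normal and gcd(|a|,|H|) = 1. If the minimal right Engel sink of a is trivial (R(a) = {1}), then [H, a] = 1, i.e. a centralizes H. -/
/-!
By Heineken's identity, `[a, x, …, x] = 1` eventually for every `x` forces `a⁻¹` to be a left
Engel element: `[h, a⁻¹, …, a⁻¹] = 1` for some length. For `h ∈ H` the commutators
`[h, a⁻¹, …, a⁻¹]` stay in `H`, and one descends along them using coprimality: if `z ∈ H` and
`c = [z, g]` commutes with `g`, then conjugating `z` by `g ^ k` multiplies it by `c ^ k`, so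
`c ^ |g| = 1`; as also `c ∈ H` and `gcd(|g|, |H|) = 1`, `c = 1`.
-/

section EngelCommutators

variable {G : Type*} [Group G]

theorem inv_mul_inv_mul_mul_eq_one_iff_commute {x y : G} :
    x⁻¹ * y⁻¹ * x * y = 1 ↔ Commute x y := by
  simpa [commutatorElement_def] using
    (commutatorElement_eq_one_iff_commute (g₁ := x⁻¹) (g₂ := y⁻¹)).trans Commute.inv_inv_iff

theorem lcomm_succ' (x g : G) (n : ℕ) :
    lcomm x g (n + 1) = lcomm (x⁻¹ * g⁻¹ * x * g) g n := by
  induction n with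
  | zero => rfl
  | succ n ih => rw [lcomm, ih, lcomm]

theorem lcomm_add_two_inv_eq_conj_rcomm (a x : G) (n : ℕ) :
    lcomm x a⁻¹ (n + 2) = (x * a⁻¹)⁻¹ * rcomm a (x * a⁻¹ * x⁻¹) (n + 1) * (x * a⁻¹) := by
  induction n with
  | zero => simp only [lcomm, rcomm]; group
  | succ n ih =>
    rw [lcomm, ih, rcomm.eq_2 a _ (n + 1)]
    generalize rcomm a (x * a⁻¹ * x⁻¹) (n + 1) = c
    group

theorem exists_lcomm_inv_eq_one_of_isRightEngelSink_one {a : G}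
    (ha : IsRightEngelSink {1} a) (x : G) : ∃ n, lcomm x a⁻¹ n = 1 := by
  obtain ⟨N, hN⟩ := ha (x * a⁻¹ * x⁻¹)
  refine ⟨N + 2, ?_⟩
  rw [lcomm_add_two_inv_eq_conj_rcomm, hN (N + 1) (by omega)]
  group

theorem Subgroup.Normal.inv_mul_inv_mul_mul_mem {H : Subgroup G} (hN : H.Normal) {z : G}
    (hz : z ∈ H) (g : G) : z⁻¹ * g⁻¹ * z * g ∈ H := by
  simpa only [mul_assoc, inv_inv] using H.mul_mem (H.inv_mem hz) (hN.conj_mem z hz g⁻¹)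

end EngelCommutators

section CoprimeAction

variable {G : Type*} [Group G] {H : Subgroup G} {g : G}

theorem commute_of_commute_comm_of_coprime (hN : H.Normal)
    (hcop : (orderOf g).Coprime (Nat.card H)) {z : G} (hz : z ∈ H)
    (hc : Commute (z⁻¹ * g⁻¹ * z * g) g) : Commute z g := by
  set c := z⁻¹ * g⁻¹ * z * g with hc_def
  have hconj : ∀ k : ℕ, (g ^ k)⁻¹ * z * g ^ k = z * c ^ k := by
    intro k
    induction k with
    | zero => simp
    | succ k ih =>
      calc (g ^ (k + 1))⁻¹ * z * g ^ (k + 1) = g⁻¹ * ((g ^ k)⁻¹ * z * g ^ k) * g := by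
            rw [pow_succ]; group
        _ = z * c * (g⁻¹ * c ^ k * g) := by rw [ih, hc_def]; group
        _ = z * c ^ (k + 1) := by
            rw [((hc.pow_left k).symm.inv_left).eq, pow_succ']; group
  have hc_pow : c ^ orderOf g = 1 := by
    simpa [pow_orderOf_eq_one] using hconj (orderOf g)
  have hc_one : c = 1 := orderOf_eq_one_iff.mp <|
    Nat.eq_one_of_dvd_coprimes hcop (orderOf_dvd_of_pow_eq_one hc_pow)
      (H.orderOf_dvd_natCard (hN.inv_mul_inv_mul_mul_mem hz g))
  exact inv_mul_inv_mul_mul_eq_one_iff_commute.mp hc_one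

theorem commute_of_lcomm_eq_one_of_coprime (hN : H.Normal)
    (hcop : (orderOf g).Coprime (Nat.card H)) {n : ℕ} :
    ∀ {z : G}, z ∈ H → lcomm z g n = 1 → Commute z g := by
  induction n with
  | zero =>
    rintro z - rfl
    exact Commute.one_left g
  | succ n ih =>
    intro z hz hzn
    rw [lcomm_succ'] at hzn
    exact commute_of_commute_comm_of_coprime hN hcop hz
      (ih (hN.inv_mul_inv_mul_mul_mem hz g) hzn)

end CoprimeAction

theorem commSub_eq_bot_of_forall_commute {G : Type*} [Group G] {H : Subgroup G} {a : G}
    (h : ∀ x ∈ H, Commute a x) : commSub H a = ⊥ := by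
  rw [commSub, eq_bot_iff, Subgroup.closure_le]
  rintro _ ⟨x, hx, rfl⟩
  rw [SetLike.mem_coe, Subgroup.mem_bot, (h x hx).inv_left.eq]
  group

theorem stmt9_general {G : Type*} [Group G] (H : Subgroup G) (hN : H.Normal)
    (a : G)
    (hcop : Nat.Coprime (orderOf a) (Nat.card H))
    (R : Set G) (hR : IsMinRightEngelSink R a) (htriv : R = {1}) :
    commSub H a = ⊥ ∧ ∀ h ∈ H, a * h = h * a := by
  have hsink : IsRightEngelSink {1} a := htriv ▸ hR.1
  have hcop' : (orderOf a⁻¹).Coprime (Nat.card H) := by rwa [orderOf_inv]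
  have hcomm : ∀ h ∈ H, Commute a h := fun h hh => by
    obtain ⟨n, hn⟩ := exists_lcomm_inv_eq_one_of_isRightEngelSink_one hsink h
    exact (Commute.inv_right_iff.mp (commute_of_lcomm_eq_one_of_coprime hN hcop' hh hn)).symm
  exact ⟨commSub_eq_bot_of_forall_commute hcomm, fun h hh => (hcomm h hh).eq⟩

theorem stmt9 {G : Type*} [Group G] [Finite G] (H : Subgroup G) (hN : H.Normal)
    (a : G) (hgen : H ⊔ Subgroup.zpowers a = ⊤)
    (hcop : Nat.Coprime (orderOf a) (Nat.card H))
    (R : Set G) (hR : IsMinRightEngelSink R a) (htriv : R = {1}) :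
    commSub H a = ⊥ ∧ ∀ h ∈ H, a * h = h * a :=
  stmt9_general H hN a hcop R hR htriv
end

section
/- Let G be a locally finite group whose Sylow 2-subgroups are finite, and suppose every 2-element g ∈ G has a finite right Engel sink. Then G has a finite normal subgroup N such that G/N has no nontrivial 2-elements (every element of G/N has odd order). -/
/-!
In a locally finite group any two finite Sylow `2`-subgroups are conjugate inside the finite
subgroup they generate, so all `2`-subgroups have order dividing a fixed `2 ^ e`. By induction on
`e`, `G` has only finitely many `2`-elements; their normal closure is the required `N`.

For an involution `t`, the group `C_G(t) / ⟨t⟩` satisfies the hypotheses with `e - 1`, so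
`C_G(t)` has finitely many `2`-elements. If `s` is conjugate to `t`, then `w = t s` is inverted
by `t` and by `s`. If `w` has odd order, the Engel commutators `[t, t w, …, t w]` are the powers
`w ^ (2 (-2) ^ n)`, which generate `⟨w⟩`; so `w` lies in one of the finitely many cyclic
subgroups generated by the finite sink of `t`. If `w` has even order, the involution in `⟨w⟩`
centralizes both `t` and `s`, so `s` is a `2`-element centralizing an involution of `C_G(t)`.
Hence the classes of involutions are finite. Every involution is conjugate into a fixed finite
Sylow subgroup, so there are finitely many involutions, and every nontrivial `2`-element
centralizes an involution among its own powers.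
-/

open Subgroup

def IsLocallyFinite (G : Type*) [Group G] : Prop :=
  ∀ S : Finset G, Finite (closure (S : Set G))

def IsPElement {G : Type*} [Group G] (p : ℕ) (g : G) : Prop :=
  ∃ k : ℕ, g ^ p ^ k = 1

def HasFiniteRightEngelSinks (p : ℕ) (G : Type*) [Group G] : Prop :=
  ∀ g : G, IsPElement p g → ∃ R : Set G, R.Finite ∧ IsRightEngelSink R g

/-- As `Nat.card` of an infinite type is `0`, this also makes every `p`-subgroup finite. -/
def PSubgroupsCardDvd (p : ℕ) (G : Type*) [Group G] (e : ℕ) : Prop :=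
  ∀ K : Subgroup G, IsPGroup p K → Nat.card K ∣ p ^ e

section

variable {G H : Type*} [Group G] [Group H] {p : ℕ}

namespace IsLocallyFinite

theorem finite_closure (hG : IsLocallyFinite G) {s : Set G} (hs : s.Finite) :
    Finite (closure s) := by
  simpa using hG hs.toFinset

theorem finite_zpowers (hG : IsLocallyFinite G) (g : G) : Finite (zpowers g) := by
  rw [zpowers_eq_closure]
  exact hG.finite_closure (Set.finite_singleton g)

theorem orderOf_ne_zero (hG : IsLocallyFinite G) (g : G) : orderOf g ≠ 0 := by
  have := hG.finite_zpowers g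
  rw [← Nat.card_zpowers]
  exact Nat.card_pos.ne'

theorem subgroup (hG : IsLocallyFinite G) (K : Subgroup G) : IsLocallyFinite K := by
  intro S
  have := hG.finite_closure ((S.finite_toSet).image K.subtype)
  rw [← MonoidHom.map_closure] at this
  exact Finite.of_equiv _ (equivMapOfInjective _ _ K.subtype_injective).toEquiv.symm

theorem of_surjective (hG : IsLocallyFinite G) {f : G →* H} (hf : Function.Surjective f) :
    IsLocallyFinite H := by
  intro S
  have := hG.finite_closure ((S.finite_toSet).image (Function.surjInv hf))
  have hS : f '' (Function.surjInv hf '' S) = S := by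
    rw [Set.image_image]; simp [Function.surjInv_eq hf]
  rw [← hS, ← MonoidHom.map_closure]
  exact ((Set.toFinite ((closure _ : Subgroup G) : Set G)).image f).to_subtype

end IsLocallyFinite

namespace IsPElement

theorem map {g : G} (hg : IsPElement p g) (f : G →* H) : IsPElement p (f g) := by
  obtain ⟨k, hk⟩ := hg
  exact ⟨k, by rw [← map_pow, hk, map_one]⟩

theorem conj {a b : G} (ha : IsPElement p a) (hab : IsConj a b) : IsPElement p b := by
  obtain ⟨c, rfl⟩ := isConj_iff.1 hab
  exact ha.map (MulAut.conj c).toMonoidHom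

theorem of_orderOf_eq {g : G} (hg : orderOf g = p) : IsPElement p g :=
  ⟨1, by rw [pow_one, ← hg, pow_orderOf_eq_one]⟩

theorem isPGroup_zpowers {g : G} (hg : IsPElement p g) : IsPGroup p (zpowers g) := by
  rintro ⟨x, hx⟩
  obtain ⟨j, rfl⟩ := mem_zpowers_iff.1 hx
  obtain ⟨k, hk⟩ := hg
  refine ⟨k, Subtype.ext ?_⟩
  change (g ^ j) ^ p ^ k = 1
  rw [← zpow_natCast, ← zpow_mul, mul_comm, zpow_mul, zpow_natCast, hk, one_zpow]

theorem of_mk {N : Subgroup G} [N.Normal] (hN : IsPGroup p N) {g : G}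
    (hg : IsPElement p (g : G ⧸ N)) : IsPElement p g := by
  obtain ⟨k, hk⟩ := hg
  obtain ⟨j, hj⟩ := hN ⟨g ^ p ^ k, (QuotientGroup.eq_one_iff _).1 (by simpa using hk)⟩
  exact ⟨k + j, by simpa [pow_add, pow_mul] using congrArg Subtype.val hj⟩

theorem coe_iff {K : Subgroup G} {g : K} : IsPElement p (g : G) ↔ IsPElement p g := by
  simp [IsPElement, ← Subtype.val_inj]

theorem exists_orderOf_eq_mem_zpowers [hp : Fact p.Prime] {g : G} (hg : IsPElement p g)
    (hg1 : g ≠ 1) : ∃ τ ∈ zpowers g, orderOf τ = p := by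
  obtain ⟨k, hk⟩ := hg
  obtain ⟨m, -, hm⟩ := (Nat.dvd_prime_pow hp.out).1 (orderOf_dvd_of_pow_eq_one hk)
  obtain ⟨m, rfl⟩ : ∃ m', m = m' + 1 := Nat.exists_eq_succ_of_ne_zero <| by
    rintro rfl; exact hg1 (orderOf_eq_one_iff.1 (by simpa using hm))
  refine ⟨g ^ p ^ m, npow_mem_zpowers _ _, ?_⟩
  rw [orderOf_pow_of_dvd (pow_ne_zero _ hp.out.ne_zero) (hm ▸ pow_dvd_pow p m.le_succ), hm,
    pow_succ, Nat.mul_div_cancel_left _ (pow_pos hp.out.pos _)]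

end IsPElement

theorem map_rcomm (f : G →* H) (g x : G) (n : ℕ) : f (rcomm g x n) = rcomm (f g) (f x) n := by
  induction n with
  | zero => rfl
  | succ n ih => simp [rcomm, ih]

theorem IsRightEngelSink.image {R : Set G} {g : G} (hR : IsRightEngelSink R g) {f : G →* H}
    (hf : Function.Surjective f) : IsRightEngelSink (f '' R) (f g) := by
  intro x
  obtain ⟨x, rfl⟩ := hf x
  obtain ⟨N, hN⟩ := hR x
  exact ⟨N, fun n hn => ⟨rcomm g x n, hN n hn, map_rcomm f g x n⟩⟩

theorem IsRightEngelSink.preimage_subtype {K : Subgroup G} {R : Set G} {g : K}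
    (hR : IsRightEngelSink R (g : G)) : IsRightEngelSink (Subtype.val ⁻¹' R) g := by
  intro x
  obtain ⟨N, hN⟩ := hR x
  refine ⟨N, fun n hn => ?_⟩
  rw [Set.mem_preimage, ← K.coe_subtype, map_rcomm]
  exact hN n hn

namespace HasFiniteRightEngelSinks

theorem subgroup (hG : HasFiniteRightEngelSinks p G) (K : Subgroup G) :
    HasFiniteRightEngelSinks p K := by
  intro g hg
  obtain ⟨R, hRfin, hR⟩ := hG g (IsPElement.coe_iff.2 hg)
  exact ⟨_, hRfin.preimage Subtype.val_injective.injOn, hR.preimage_subtype⟩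

theorem quotient (hG : HasFiniteRightEngelSinks p G) {N : Subgroup G} [N.Normal]
    (hN : IsPGroup p N) : HasFiniteRightEngelSinks p (G ⧸ N) := by
  intro x hx
  obtain ⟨g, rfl⟩ := QuotientGroup.mk_surjective x
  obtain ⟨R, hRfin, hR⟩ := hG g (hx.of_mk hN)
  exact ⟨_, hRfin.image _, hR.image (QuotientGroup.mk'_surjective N)⟩

end HasFiniteRightEngelSinks

theorem zpow_conj_of_conj_eq_inv {a v : G} (h : a⁻¹ * v * a = v⁻¹) (j : ℤ) :
    a⁻¹ * v ^ j * a = v ^ (-j) := by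
  have := conj_zpow (a := a⁻¹) (b := v) (i := j)
  rw [inv_inv] at this
  rw [← this, h, inv_zpow']

theorem rcomm_mul_of_conj_eq_inv {t v : G} (hv : t⁻¹ * v * t = v⁻¹) (n : ℕ) :
    rcomm t (t * v) (n + 1) = v ^ (2 * (-2) ^ n : ℤ) := by
  have hx : (t * v)⁻¹ * v * (t * v) = v⁻¹ :=
    calc (t * v)⁻¹ * v * (t * v) = v⁻¹ * (t⁻¹ * v * t) * v := by group
      _ = v⁻¹ := by rw [hv]; group
  induction n with
  | zero =>
    calc rcomm t (t * v) (0 + 1) = (t⁻¹ * v * t)⁻¹ * v := by simp only [rcomm]; group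
      _ = v ^ (2 * (-2) ^ 0 : ℤ) := by rw [hv, inv_inv, pow_zero, mul_one, zpow_two]
  | succ n ih =>
    calc rcomm t (t * v) (n + 1 + 1) = (v ^ (2 * (-2) ^ n : ℤ))⁻¹ *
          ((t * v)⁻¹ * v ^ (2 * (-2) ^ n : ℤ) * (t * v)) := by
            rw [rcomm, ih]; group
      _ = v ^ (2 * (-2) ^ (n + 1) : ℤ) := by
        rw [zpow_conj_of_conj_eq_inv hx, ← zpow_neg, ← zpow_add]; ring_nf

theorem IsRightEngelSink.exists_mem_zpowers_of_conj_eq_inv {R : Set G} {t v : G}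
    (hR : IsRightEngelSink R t) (hv : t⁻¹ * v * t = v⁻¹) (hodd : Odd (orderOf v)) :
    ∃ r ∈ R, v ∈ zpowers r := by
  obtain ⟨N, hN⟩ := hR (t * v)
  refine ⟨_, hN (N + 1) N.le_succ, ?_⟩
  rw [rcomm_mul_of_conj_eq_inv hv, mem_zpowers_zpow_iff, Int.gcd_eq_natAbs, Int.natAbs_mul,
    Int.natAbs_pow]
  have h2 := Nat.coprime_two_left.2 hodd
  exact h2.mul_left (h2.pow_left _)

theorem commute_pow_of_conj_eq_inv {u w : G} (h : u⁻¹ * w * u = w⁻¹) {m : ℕ}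
    (hm : (w ^ m)⁻¹ = w ^ m) : Commute (w ^ m) u := by
  have : u⁻¹ * w ^ m * u = w ^ m := by
    have := conj_pow (a := u⁻¹) (b := w) (i := m)
    rw [inv_inv] at this
    rw [← this, h, inv_pow, hm]
  calc w ^ m * u = u * (u⁻¹ * w ^ m * u) := by group
    _ = u * w ^ m := by rw [this]

theorem IsLocallyFinite.finite_conjugatesOf_of_orderOf_eq_two (hG : IsLocallyFinite G)
    (hsink : HasFiniteRightEngelSinks 2 G)
    (hC : ∀ c : G, orderOf c = 2 → {g ∈ centralizer {c} | IsPElement 2 g}.Finite)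
    {t : G} (ht : orderOf t = 2) : (conjugatesOf t).Finite := by
  obtain ⟨R, hRfin, hR⟩ := hsink t (.of_orderOf_eq ht)
  have hF : (⋃ r ∈ R, (zpowers r : Set G)).Finite :=
    hRfin.biUnion fun r _ => have := hG.finite_zpowers r; Set.toFinite _
  have hJ : {c ∈ centralizer {t} | orderOf c = 2}.Finite :=
    (hC t ht).subset fun c hc => ⟨hc.1, .of_orderOf_eq hc.2⟩
  refine ((hF.image (t * ·)).union (hJ.biUnion fun c hc => hC c hc.2)).subset ?_
  intro s hts
  have htinv : t⁻¹ = t := inv_eq_self_of_orderOf_eq_two ht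
  have hsinv : s⁻¹ = s := by
    obtain ⟨y, rfl⟩ := isConj_iff.1 hts
    simp [htinv, mul_assoc]
  set w := t * s with hw
  have hwt : t⁻¹ * w * t = w⁻¹ := by
    simp only [w, mul_inv_rev, inv_mul_cancel_left]
    rw [hsinv, htinv]
  have hws : s⁻¹ * w * s = w⁻¹ := by
    rw [hsinv, hw, mul_inv_rev, hsinv, htinv, mul_assoc, mul_assoc,
      mul_eq_one_iff_eq_inv.2 hsinv.symm, mul_one]
  rcases Nat.even_or_odd (orderOf w) with ⟨m, hm⟩ | hodd
  · right
    have hm0 : m ≠ 0 := by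
      rintro rfl
      exact hG.orderOf_ne_zero w hm
    have hc : orderOf (w ^ m) = 2 := by
      rw [orderOf_pow_of_dvd hm0 (hm ▸ ⟨2, by ring⟩), hm, ← two_mul,
        Nat.mul_div_cancel _ (Nat.pos_of_ne_zero hm0)]
    have hcinv := inv_eq_self_of_orderOf_eq_two hc
    refine Set.mem_biUnion (x := w ^ m)
      ⟨mem_centralizer_singleton_iff.2 (commute_pow_of_conj_eq_inv hwt hcinv).eq, hc⟩
      ⟨mem_centralizer_singleton_iff.2 (commute_pow_of_conj_eq_inv hws hcinv).symm.eq,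
        (IsPElement.of_orderOf_eq ht).conj hts⟩
  · left
    obtain ⟨r, hr, hwr⟩ := hR.exists_mem_zpowers_of_conj_eq_inv hwt hodd
    refine ⟨w, Set.mem_biUnion hr hwr, ?_⟩
    rw [← htinv]
    exact inv_mul_cancel_left t s

theorem Subgroup.normal_of_le_center {H : Subgroup G} (h : H ≤ center G) : H.Normal :=
  ⟨fun z hz c => by rwa [mem_center_iff.1 (h hz) c, mul_inv_cancel_right]⟩

theorem QuotientGroup.finite_preimage_mk (N : Subgroup G) [Finite N] {t : Set (G ⧸ N)}
    (ht : t.Finite) : (QuotientGroup.mk ⁻¹' t).Finite :=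
  have := ht.to_subtype
  Set.finite_coe_iff.1 (Finite.of_equiv _ (QuotientGroup.preimageMkEquivSubgroupProdSet N t).symm)

theorem finite_setOf_isPElement_of_quotient {N : Subgroup G} [N.Normal] [Finite N]
    (h : {x : G ⧸ N | IsPElement p x}.Finite) : {g : G | IsPElement p g}.Finite :=
  (QuotientGroup.finite_preimage_mk N h).subset fun _ hg => hg.map (QuotientGroup.mk' N)

theorem IsLocallyFinite.exists_le_smul_sylow [Fact p.Prime] (hG : IsLocallyFinite G)
    (P : Sylow p G) [Finite P] {K : Subgroup G} [Finite K] (hK : IsPGroup p K) :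
    ∃ g : G, K ≤ (g • P : Sylow p G) := by
  let L := closure ((P : Set G) ∪ K)
  have : Finite L := hG.finite_closure ((Set.toFinite _).union (Set.toFinite _))
  have hPL : (P : Subgroup G) ≤ L := fun x hx => subset_closure (Or.inl hx)
  have hKL : K ≤ L := fun x hx => subset_closure (Or.inr hx)
  obtain ⟨Q, hQ⟩ := (hK.comap_subtype (K := L)).exists_le_sylow
  obtain ⟨l, rfl⟩ := MulAction.exists_smul_eq L (P.subtype hPL) Q
  refine ⟨l, fun x hx => ?_⟩
  have := hQ (show (⟨x, hKL hx⟩ : L) ∈ K.comap L.subtype from hx)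
  rwa [Sylow.smul_subtype, Sylow.coe_subtype, mem_subgroupOf] at this

theorem IsLocallyFinite.exists_pSubgroupsCardDvd [Fact p.Prime] (hG : IsLocallyFinite G)
    (hsyl : ∀ P : Sylow p G, Finite P) : ∃ e, PSubgroupsCardDvd p G e := by
  obtain ⟨P⟩ : Nonempty (Sylow p G) := inferInstance
  have := hsyl P
  obtain ⟨e, he⟩ := IsPGroup.iff_card.1 P.isPGroup'
  refine ⟨e, fun K hK => ?_⟩
  obtain ⟨Q, hKQ⟩ := hK.exists_le_sylow
  have := hsyl Q
  have : Finite K := Finite.of_injective _ (inclusion_injective hKQ)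
  obtain ⟨g, hg⟩ := hG.exists_le_smul_sylow P hK
  rw [← he, Nat.card_congr (P.equivSMul g).toEquiv]
  exact card_dvd_of_le hg

theorem IsLocallyFinite.finite_setOf_orderOf_eq [Fact p.Prime] (hG : IsLocallyFinite G)
    (P : Sylow p G) [Finite P] (hconj : ∀ t : G, orderOf t = p → (conjugatesOf t).Finite) :
    {t : G | orderOf t = p}.Finite := by
  refine ((Set.toFinite {x ∈ (P : Set G) | orderOf x = p}).biUnion fun x hx =>
    hconj x hx.2).subset fun t ht => ?_
  have := hG.finite_zpowers t
  obtain ⟨g, hg⟩ := hG.exists_le_smul_sylow P (IsPElement.of_orderOf_eq ht).isPGroup_zpowers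
  have hmem := hg (mem_zpowers t)
  rw [Sylow.coe_subgroup_smul, mem_pointwise_smul_iff_inv_smul_mem, MulAut.smul_def,
    MulAut.conj_inv_apply] at hmem
  have hord : orderOf (g⁻¹ * t * g) = p := by
    rw [← ht]
    simpa using orderOf_injective (MulAut.conj g⁻¹).toMonoidHom (MulAut.conj g⁻¹).injective t
  exact Set.mem_biUnion ⟨hmem, hord⟩ (isConj_iff.2 ⟨g, by group⟩)

namespace PSubgroupsCardDvd

variable {e : ℕ}

theorem finite (h : PSubgroupsCardDvd p G e) (hp : p ≠ 0) {K : Subgroup G} (hK : IsPGroup p K) :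
    Finite K :=
  Nat.finite_of_card_ne_zero (ne_zero_of_dvd_ne_zero (pow_ne_zero _ hp) (h K hK))

theorem subgroup (h : PSubgroupsCardDvd p G e) (K : Subgroup G) : PSubgroupsCardDvd p K e :=
  fun _ hL => card_map_of_injective K.subtype_injective ▸ h _ (hL.map K.subtype)

theorem quotient [hp : Fact p.Prime] (h : PSubgroupsCardDvd p G (e + 1)) {N : Subgroup G}
    [N.Normal] (hN : Nat.card N = p) : PSubgroupsCardDvd p (G ⧸ N) e := by
  intro Q hQ
  have hker : IsPGroup p (QuotientGroup.mk' N).ker := by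
    rw [QuotientGroup.ker_mk']
    exact IsPGroup.of_card (n := 1) (by rw [hN, pow_one])
  have := h _ (hQ.comap_of_ker_isPGroup _ hker)
  rw [show Nat.card (Q.comap (QuotientGroup.mk' N)) = Nat.card N * Nat.card Q from
    QuotientGroup.card_preimage_mk N Q, hN, pow_succ, mul_comm] at this
  exact Nat.dvd_of_mul_dvd_mul_right hp.out.pos this

end PSubgroupsCardDvd

theorem odd_orderOf_mk_of_isPElement_mem {N : Subgroup G} [N.Normal]
    (hN : ∀ g : G, IsPElement 2 g → g ∈ N) {g : G} (hg : orderOf g ≠ 0) :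
    Odd (orderOf (g : G ⧸ N)) := by
  obtain ⟨k, u, hu, hku⟩ := Nat.exists_eq_two_pow_mul_odd hg
  have : (g : G ⧸ N) ^ u = 1 := by
    rw [← QuotientGroup.mk_pow, QuotientGroup.eq_one_iff]
    exact hN _ ⟨k, by rw [← pow_mul, mul_comm, ← hku, pow_orderOf_eq_one]⟩
  exact hu.of_dvd_nat (orderOf_dvd_of_pow_eq_one this)

end

universe u

section

variable {G : Type u} [Group G]

theorem IsLocallyFinite.finite_setOf_isPElement_two_of_centralizers (hG : IsLocallyFinite G)
    (hsink : HasFiniteRightEngelSinks 2 G) {e : ℕ} (hbdd : PSubgroupsCardDvd 2 G e)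
    (hC : ∀ c : G, orderOf c = 2 → {g ∈ centralizer {c} | IsPElement 2 g}.Finite) :
    {g : G | IsPElement 2 g}.Finite := by
  obtain ⟨P⟩ : Nonempty (Sylow 2 G) := inferInstance
  have := hbdd.finite two_ne_zero P.isPGroup'
  have hinv := hG.finite_setOf_orderOf_eq P fun t ht =>
    hG.finite_conjugatesOf_of_orderOf_eq_two hsink hC ht
  refine ((Set.finite_singleton 1).union (hinv.biUnion hC)).subset fun g hg => ?_
  by_cases hg1 : g = 1
  · exact Or.inl hg1
  obtain ⟨τ, hτg, hτ⟩ := IsPElement.exists_orderOf_eq_mem_zpowers hg hg1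
  obtain ⟨j, rfl⟩ := mem_zpowers_iff.1 hτg
  exact Or.inr <|
    Set.mem_biUnion hτ ⟨mem_centralizer_singleton_iff.2 (Commute.self_zpow g j).eq, hg⟩

theorem IsLocallyFinite.finite_setOf_isPElement_two_centralizer {e : ℕ}
    (ih : ∀ {Q : Type u} [Group Q], IsLocallyFinite Q → HasFiniteRightEngelSinks 2 Q →
      PSubgroupsCardDvd 2 Q e → {x : Q | IsPElement 2 x}.Finite)
    (hG : IsLocallyFinite G) (hsink : HasFiniteRightEngelSinks 2 G)
    (hbdd : PSubgroupsCardDvd 2 G (e + 1)) {t : G} (ht : orderOf t = 2) :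
    {g ∈ centralizer {t} | IsPElement 2 g}.Finite := by
  set C := centralizer ({t} : Set G)
  let τ : C := ⟨t, mem_centralizer_singleton_iff.2 rfl⟩
  have : (zpowers τ).Normal := normal_of_le_center <| zpowers_le.2 <|
    mem_center_iff.2 fun c => Subtype.ext (mem_centralizer_singleton_iff.1 c.2)
  have hZ : Nat.card (zpowers τ) = 2 := by rw [Nat.card_zpowers, orderOf_mk, ht]
  have : Finite (zpowers τ) := Nat.finite_of_card_ne_zero (by rw [hZ]; norm_num)
  have hCfin := finite_setOf_isPElement_of_quotient <|
    ih ((hG.subgroup C).of_surjective (QuotientGroup.mk'_surjective (zpowers τ)))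
      ((hsink.subgroup C).quotient (IsPGroup.of_card (n := 1) (by rw [hZ, pow_one])))
      ((hbdd.subgroup C).quotient hZ)
  refine (hCfin.image Subtype.val).subset fun g ⟨hgC, hg⟩ => ?_
  exact ⟨⟨g, hgC⟩, IsPElement.coe_iff.1 hg, rfl⟩

theorem IsLocallyFinite.finite_setOf_isPElement_two (hG : IsLocallyFinite G)
    (hsink : HasFiniteRightEngelSinks 2 G) {e : ℕ} (hbdd : PSubgroupsCardDvd 2 G e) :
    {g : G | IsPElement 2 g}.Finite := by
  induction e generalizing G with
  | zero =>
    refine hG.finite_setOf_isPElement_two_of_centralizers hsink hbdd fun c hc => ?_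
    have := hbdd _ (IsPElement.of_orderOf_eq hc).isPGroup_zpowers
    rw [Nat.card_zpowers, hc] at this
    norm_num at this
  | succ e ih =>
    exact hG.finite_setOf_isPElement_two_of_centralizers hsink hbdd fun c hc =>
      hG.finite_setOf_isPElement_two_centralizer ih hsink hbdd hc

end

theorem stmt10 {G : Type*} [Group G]
    (hlf : ∀ S : Finset G, Finite (Subgroup.closure (S : Set G)))
    (hsyl : ∀ P : Sylow 2 G, Finite P)
    (hsink : ∀ g : G, (∃ k : ℕ, g ^ (2 ^ k) = 1) →
      ∃ R : Set G, R.Finite ∧ IsRightEngelSink R g) :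
    ∃ N : Subgroup G, ∃ _ : N.Normal, Finite ↥N ∧ ∀ x : G ⧸ N, Odd (orderOf x) := by
  have hG : IsLocallyFinite G := hlf
  obtain ⟨e, hbdd⟩ := hG.exists_pSubgroupsCardDvd hsyl
  have hfin := hG.finite_setOf_isPElement_two hsink hbdd
  set N := normalClosure {g : G | IsPElement 2 g}
  refine ⟨N, inferInstance, ?_, fun x => ?_⟩
  · refine hG.finite_closure (hfin.subset fun x hx => ?_)
    obtain ⟨a, ha, hax⟩ := Group.mem_conjugatesOfSet_iff.1 hx
    exact IsPElement.conj ha hax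
  · obtain ⟨g, rfl⟩ := QuotientGroup.mk_surjective x
    exact odd_orderOf_mk_of_isPElement_mem (N := N) (fun g hg => subset_normalClosure hg)
      (hG.orderOf_ne_zero g)
end

section
/- Let G = H⟨a⟩ be a finite group where H is a normal nilpotent subgroup with gcd(|a|,|H|) = 1 and H = [H, a]. If N is a normal a-invariant subgroup of H with R(a) ∩ N = {1}, then N ≤ Z(H). -/
/-!
Let `β` be the endomorphism `x ↦ a⁻¹ x a` of `N`; then `β^[|a|] = id` with `|a|` coprime to `|N|`.
If `β` fixes `c = x⁻¹ β x`, then `β^[k] x = x c ^ k`, so `c ^ |a| = 1` and hence `c = 1`.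
For `w ∈ N` the Engel commutators `[a, a w, …, a w]` lie in `N`, hence eventually in `R ∩ N = 1`.
In `N / [N, N]` these commutators are, up to sign, the iterates of `β - 1` at `w`, so by the
previous remark `β` acts trivially there: `x⁻¹ β x ∈ [N, N]`. Descending along the
derived series of the solvable group `N`, `a` centralizes `N`. Finally `H = [H, a]` is generated
by the elements `(h⁻¹ a⁻¹ h) a`, each a product of two elements centralizing the `H`-normal `N`.
-/

section EngelEndomorphism

variable {K : Type*} [Group K]

/-- With `β` conjugation by `a`, `engelSeq β w n` is the commutator `[a, a w, …, a w]` with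
`n + 1` entries `a w`. -/
def engelSeq (β : K →* K) (w : K) : ℕ → K
  | 0 => (β w)⁻¹ * w
  | n + 1 => (engelSeq β w n)⁻¹ * (w⁻¹ * β (engelSeq β w n) * w)

lemma map_engelSeq {L : Type*} [Group L] (f : K →* L) {β : K →* K} {γ : L →* L}
    (hf : ∀ x, f (β x) = γ (f x)) (w : K) (n : ℕ) :
    f (engelSeq β w n) = engelSeq γ (f w) n := by
  induction n with
  | zero => simp [engelSeq, hf]
  | succ n ih => simp [engelSeq, hf, ih]

lemma iterate_eq_mul_pow (β : K →* K) {x : K} (hfix : Function.IsFixedPt β (x⁻¹ * β x))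
    (k : ℕ) : β^[k] x = x * (x⁻¹ * β x) ^ k := by
  induction k with
  | zero => simp
  | succ k ih =>
    rw [Function.iterate_succ_apply', ih, map_mul, map_pow, hfix.eq, pow_succ', ← mul_assoc,
      mul_inv_cancel_left]

lemma eq_one_of_pow_eq_one_of_coprime [Finite K] {m : ℕ} (hcop : m.Coprime (Nat.card K))
    {g : K} (hg : g ^ m = 1) : g = 1 :=
  hcop.symm.pow_left_bijective.injective (by simpa using hg)

lemma isFixedPt_of_isFixedPt_inv_mul_map [Finite K] {β : K →* K} {m : ℕ}
    (hβm : ∀ x, β^[m] x = x) (hcop : m.Coprime (Nat.card K)) {x : K}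
    (hfix : Function.IsFixedPt β (x⁻¹ * β x)) : Function.IsFixedPt β x := by
  have hpow : (x⁻¹ * β x) ^ m = 1 := by
    simpa [hβm x] using (iterate_eq_mul_pow β hfix m).symm
  exact (inv_mul_eq_one.mp (eq_one_of_pow_eq_one_of_coprime hcop hpow)).symm

lemma isFixedPt_of_engelSeq_eq_one {Q : Type*} [CommGroup Q] [Finite Q] {β : Q →* Q} {m : ℕ}
    (hβm : ∀ q, β^[m] q = q) (hcop : m.Coprime (Nat.card Q))
    (hEngel : ∀ q, ∃ n, engelSeq β q n = 1) (q : Q) : Function.IsFixedPt β q := by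
  set ψ : Q → Q := fun r => r⁻¹ * β r with hψ
  have hψ_inv : ∀ r, ψ r⁻¹ = (ψ r)⁻¹ := fun r => by simp [hψ, mul_comm]
  have hψψ : ∀ r, ψ (ψ r) = 1 → ψ r = 1 := fun r h => by
    have hr : Function.IsFixedPt β r :=
      isFixedPt_of_isFixedPt_inv_mul_map hβm hcop (inv_mul_eq_one.mp h).symm
    simp [hψ, hr.eq]
  have hψ_iterate : ∀ n r, ψ^[n] r = 1 → ψ r = 1 := by
    intro n
    induction n with
    | zero => intro r hr; simp [show r = 1 from hr, hψ]
    | succ n ih => exact fun r hr => hψψ r (ih (ψ r) hr)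
  have hseq : ∀ n, engelSeq β q n = ψ^[n] (ψ q)⁻¹ := by
    intro n
    induction n with
    | zero => simp [engelSeq, hψ, mul_comm]
    | succ n ih =>
      rw [Function.iterate_succ_apply', ← ih, engelSeq, mul_comm q⁻¹, inv_mul_cancel_right]
  obtain ⟨n, hn⟩ := hEngel q
  have hq : ψ q = 1 := hψψ q (by simpa [hψ_inv] using hψ_iterate n _ ((hseq n).symm.trans hn))
  exact (inv_mul_eq_one.mp hq).symm

def MonoidHom.restrictInvariant (β : K →* K) (D : Subgroup K) (hD : ∀ x ∈ D, β x ∈ D) :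
    D →* D :=
  (β.comp D.subtype).codRestrict D fun x => hD x x.2

lemma MonoidHom.coe_iterate_restrictInvariant_apply (β : K →* K) (D : Subgroup K)
    (hD : ∀ x ∈ D, β x ∈ D) (k : ℕ) (x : D) :
    ((β.restrictInvariant D hD)^[k] x : K) = β^[k] x :=
  Function.Semiconj.iterate_right (f := Subtype.val) (fun _ => rfl) k x

lemma inv_mul_map_mem_commutator [Finite K] {β : K →* K} {m : ℕ} (hβm : ∀ x, β^[m] x = x)
    (hcop : m.Coprime (Nat.card K)) {D : Subgroup K} (hD : ∀ x ∈ D, β x ∈ D)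
    (hEngel : ∀ w ∈ D, ∃ n, engelSeq β w n = 1) {x : K} (hx : x ∈ D) :
    x⁻¹ * β x ∈ ⁅D, D⁆ := by
  set βD := β.restrictInvariant D hD
  set βQ := Abelianization.map βD
  have hof : ∀ y, Abelianization.of (βD y) = βQ (Abelianization.of y) :=
    fun y => (Abelianization.map_of βD y).symm
  have hsurj : Function.Surjective (Abelianization.of : D →* Abelianization D) :=
    QuotientGroup.mk'_surjective _
  have hβDm : ∀ y, βD^[m] y = y := fun y => Subtype.ext <| by
    rw [MonoidHom.coe_iterate_restrictInvariant_apply, hβm]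
  have hβQm : ∀ q, βQ^[m] q = q := by
    intro q
    obtain ⟨y, rfl⟩ := hsurj q
    rw [← Function.Semiconj.iterate_right hof m y, hβDm]
  have hcopQ : m.Coprime (Nat.card (Abelianization D)) :=
    hcop.coprime_dvd_right <| (Subgroup.card_quotient_dvd_card _).trans
      (Subgroup.card_subgroup_dvd_card D)
  have hEngelQ : ∀ q, ∃ n, engelSeq βQ q n = 1 := by
    intro q
    obtain ⟨w, rfl⟩ := hsurj q
    obtain ⟨n, hn⟩ := hEngel w w.2
    have hnD : engelSeq βD w n = 1 :=
      Subtype.ext <| (map_engelSeq D.subtype (fun _ => rfl) w n).trans hn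
    exact ⟨n, by rw [← map_engelSeq Abelianization.of hof, hnD, map_one]⟩
  have hker : (⟨x, hx⟩ : D)⁻¹ * βD ⟨x, hx⟩ ∈ commutator D := by
    rw [← Abelianization.ker_of, MonoidHom.mem_ker, map_mul, map_inv, hof,
      (isFixedPt_of_engelSeq_eq_one hβQm hcopQ hEngelQ _).eq, inv_mul_cancel]
  have hmem := Subgroup.mem_map_of_mem D.subtype hker
  rwa [D.map_subtype_commutator] at hmem

theorem isFixedPt_of_engelSeq_eq_one_of_isSolvable [Finite K] [Group.IsSolvable K]
    {β : K →* K} {m : ℕ} (hβm : ∀ x, β^[m] x = x) (hcop : m.Coprime (Nat.card K))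
    (hEngel : ∀ w, ∃ n, engelSeq β w n = 1) (x : K) : Function.IsFixedPt β x := by
  obtain ⟨n, hn⟩ := (Group.isSolvable_def K).mp ‹_›
  have hinv : ∀ k, ∀ y ∈ derivedSeries K k, β y ∈ derivedSeries K k := fun k _ hy =>
    map_derivedSeries_le_derivedSeries β k (Subgroup.mem_map_of_mem β hy)
  have hfix : ∀ k ≤ n, ∀ y ∈ derivedSeries K k, Function.IsFixedPt β y := by
    refine fun k hk => Nat.decreasingInduction (fun k _ ih y hy => ?_) ?_ hk
    · refine isFixedPt_of_isFixedPt_inv_mul_map hβm hcop (ih _ ?_)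
      rw [derivedSeries_succ]
      exact inv_mul_map_mem_commutator hβm hcop (hinv k) (fun w _ => hEngel w) hy
    · rw [hn]
      rintro y hy
      rw [Subgroup.mem_bot.mp hy]
      exact map_one β
  exact hfix 0 n.zero_le x (by simp)

end EngelEndomorphism

section ConjugationAction

variable {G : Type*} [Group G]

lemma engelSeq_conj_eq_rcomm (a w : G) (n : ℕ) :
    engelSeq (MulAut.conj a)⁻¹.toMonoidHom w n = rcomm a (a * w) (n + 1) := by
  induction n with
  | zero =>
    simp only [engelSeq, rcomm, MulEquiv.coe_toMonoidHom, MulAut.conj_inv_apply]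
    group
  | succ n ih =>
    rw [engelSeq, ih, MulEquiv.coe_toMonoidHom, MulAut.conj_inv_apply]
    conv_rhs => rw [rcomm]
    group

lemma iterate_conj_inv_apply (a x : G) (k : ℕ) :
    (MulAut.conj a)⁻¹.toMonoidHom^[k] x = (a ^ k)⁻¹ * x * a ^ k := by
  induction k with
  | zero => simp
  | succ k ih =>
    rw [Function.iterate_succ_apply', ih, MulEquiv.coe_toMonoidHom, MulAut.conj_inv_apply,
      pow_succ]
    group

theorem mem_centralizer_of_isRightEngelSink [Finite G] {a : G} {R : Set G}
    (hR : IsRightEngelSink R a) {N : Subgroup G} [Group.IsSolvable N]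
    (hcop : (orderOf a).Coprime (Nat.card N)) (hNa : ∀ n ∈ N, a⁻¹ * n * a ∈ N)
    (hint : R ∩ N ⊆ {1}) : a ∈ Subgroup.centralizer N := by
  set β := (MulAut.conj a)⁻¹.toMonoidHom
  have hβ : ∀ x, β x = a⁻¹ * x * a := MulAut.conj_inv_apply a
  set βN := β.restrictInvariant N fun x hx => hβ x ▸ hNa x hx
  have hβNm : ∀ x, βN^[orderOf a] x = x := fun x => Subtype.ext <| by
    rw [MonoidHom.coe_iterate_restrictInvariant_apply, iterate_conj_inv_apply,
      pow_orderOf_eq_one, inv_one, one_mul, mul_one]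
  have hEngel : ∀ w, ∃ n, engelSeq βN w n = 1 := by
    intro w
    obtain ⟨n, hn⟩ := hR (a * w)
    have hcoe : ((engelSeq βN w n : N) : G) = rcomm a (a * w) (n + 1) :=
      (map_engelSeq N.subtype (fun _ => rfl) w n).trans (engelSeq_conj_eq_rcomm a w n)
    exact ⟨n, Subtype.ext (hint ⟨hcoe ▸ hn (n + 1) n.le_succ, (engelSeq βN w n).2⟩)⟩
  refine Subgroup.mem_centralizer_iff.mpr fun x hx => ?_
  have hfix : a⁻¹ * x * a = x := (hβ x).symm.trans <| congrArg Subtype.val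
    (isFixedPt_of_engelSeq_eq_one_of_isSolvable hβNm hcop hEngel ⟨x, hx⟩).eq
  calc x * a = a * (a⁻¹ * x * a) := by group
    _ = a * x := by rw [hfix]

lemma commSub_le_centralizer {H N : Subgroup G} {a : G}
    (hNnorm : ∀ h ∈ H, ∀ n ∈ N, h * n * h⁻¹ ∈ N) (ha : a ∈ Subgroup.centralizer N) :
    commSub H a ≤ Subgroup.centralizer N := by
  have hconj : ∀ h ∈ H, ∀ g ∈ Subgroup.centralizer N, h⁻¹ * g * h ∈ Subgroup.centralizer N := by
    refine fun h hh g hg => Subgroup.mem_centralizer_iff.mpr fun n hn => ?_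
    calc n * (h⁻¹ * g * h) = h⁻¹ * ((h * n * h⁻¹) * g) * h := by group
      _ = h⁻¹ * (g * (h * n * h⁻¹)) * h := by
        rw [Subgroup.mem_centralizer_iff.mp hg _ (hNnorm h hh n hn)]
      _ = h⁻¹ * g * h * n := by group
  rw [commSub, Subgroup.closure_le]
  rintro _ ⟨h, hh, rfl⟩
  rw [← mul_assoc, ← mul_assoc]
  exact mul_mem (hconj h hh _ (inv_mem ha)) ha

end ConjugationAction

theorem stmt13_general {G : Type*} [Group G] [Finite G] (H : Subgroup G)
    (hnil : Group.IsNilpotent ↥H)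
    (a : G)
    (hcop : Nat.Coprime (orderOf a) (Nat.card H))
    (hHa : commSub H a = H)
    (R : Set G) (hR : IsMinRightEngelSink R a)
    (N : Subgroup G) (hNH : N ≤ H)
    (hNnorm : ∀ h ∈ H, ∀ n ∈ N, h * n * h⁻¹ ∈ N)
    (hNa : ∀ n ∈ N, a⁻¹ * n * a ∈ N)
    (hint : R ∩ (N : Set G) ⊆ {1}) :
    ∀ n ∈ N, ∀ h ∈ H, n * h = h * n := by
  have : Group.IsNilpotent N := Group.nilpotent_of_mulEquiv (Subgroup.subgroupOfEquivOfLe hNH)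
  have ha : a ∈ Subgroup.centralizer N := mem_centralizer_of_isRightEngelSink hR.1
    (hcop.coprime_dvd_right (Subgroup.card_dvd_of_le hNH)) hNa hint
  have hH : H ≤ Subgroup.centralizer N := hHa ▸ commSub_le_centralizer hNnorm ha
  exact fun n hn h hh => Subgroup.mem_centralizer_iff.mp (hH hh) n hn

theorem stmt13 {G : Type*} [Group G] [Finite G] (H : Subgroup G) (hN : H.Normal)
    (hnil : Group.IsNilpotent ↥H)
    (a : G) (hgen : H ⊔ Subgroup.zpowers a = ⊤)
    (hcop : Nat.Coprime (orderOf a) (Nat.card H))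
    (hHa : commSub H a = H)
    (R : Set G) (hR : IsMinRightEngelSink R a)
    (N : Subgroup G) (hNH : N ≤ H)
    (hNnorm : ∀ h ∈ H, ∀ n ∈ N, h * n * h⁻¹ ∈ N)
    (hNa : ∀ n ∈ N, a⁻¹ * n * a ∈ N)
    (hint : R ∩ (N : Set G) ⊆ {1}) :
    ∀ n ∈ N, ∀ h ∈ H, n * h = h * n :=
  stmt13_general H hnil a hcop hHa R hR N hNH hNnorm hNa hint
end

section
/- Let G = H⟨a⟩ be a finite group where H is a normal abelian subgroup and gcd(|a|, |H|) = 1. Then H decomposes as the direct product H = [H, a] × C_H(a), and every element of [H, a] lies in the minimal right Engel sink of a. -/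
open Function Filter

section PeriodicPts

variable {A : Type*} [Group A] [Finite A] {f : A →* A}

theorem MonoidHom.mem_periodicPts_of_disjoint (hf : Disjoint f.range f.ker) {x : A}
    (hx : x ∈ f.range) : x ∈ periodicPts f := by
  have hmaps : Set.MapsTo f f.range f.range := fun y _ => ⟨y, rfl⟩
  have hinj : Set.InjOn f f.range := (Set.injOn_iff_map_eq_one f f.range).2 fun y hy hfy =>
    (Subgroup.disjoint_def.1 hf) hy hfy
  obtain ⟨n, hn, hper⟩ := mem_periodicPts.1 ((hmaps.restrict_inj.2 hinj).mem_periodicPts ⟨x, hx⟩)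
  exact mk_mem_periodicPts hn <|
    (hmaps.coe_iterate_restrict ⟨x, hx⟩ n).symm.trans (congrArg Subtype.val hper.eq)

theorem MonoidHom.range_sup_ker_eq_top (hf : Disjoint f.range f.ker) : f.range ⊔ f.ker = ⊤ := by
  refine eq_top_iff.2 fun x _ => ?_
  obtain ⟨n, hn, hper⟩ := mem_periodicPts.1 (f.mem_periodicPts_of_disjoint hf ⟨x, rfl⟩)
  obtain ⟨m, rfl⟩ := Nat.exists_eq_succ_of_ne_zero hn.ne'
  have hy : f^[m + 1] x ∈ f.range := by
    rw [iterate_succ_apply']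
    exact ⟨_, rfl⟩
  have hfy : f (f^[m + 1] x) = f x := by
    rw [← iterate_succ_apply' f, iterate_succ_apply]
    exact hper
  have hker : (f^[m + 1] x)⁻¹ * x ∈ f.ker := by
    rw [MonoidHom.mem_ker, map_mul, map_inv, hfy, inv_mul_cancel]
  simpa using Subgroup.mul_mem _ (Subgroup.mem_sup_left hy) (Subgroup.mem_sup_right hker)

end PeriodicPts

theorem Function.frequently_iterate_eq_of_mem_periodicPts {α : Type*} {f : α → α} {x : α}
    (hx : x ∈ periodicPts f) : ∃ᶠ n in atTop, f^[n] x = x := by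
  obtain ⟨n, hn, hper⟩ := mem_periodicPts.1 hx
  exact frequently_atTop.2 fun N => ⟨n * N, Nat.le_mul_of_pos_left N hn, hper.mul_const N⟩

theorem conj_pow_eq_mul_pow {G : Type*} [Group G] {a h x : G} (hx : Commute a x)
    (hh : a⁻¹ * h * a = h * x) (k : ℕ) : (a ^ k)⁻¹ * h * a ^ k = h * x ^ k := by
  induction k with
  | zero => simp
  | succ k ih =>
    calc (a ^ (k + 1))⁻¹ * h * a ^ (k + 1) = a⁻¹ * ((a ^ k)⁻¹ * h * a ^ k) * a := by group
      _ = a⁻¹ * h * a * x ^ k := by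
        rw [ih, mul_assoc (a⁻¹ * h), (hx.pow_right k).eq]; group
      _ = h * x ^ (k + 1) := by rw [hh, pow_succ', mul_assoc]

theorem rcomm_succ' {G : Type*} [Group G] (g x : G) (n : ℕ) :
    rcomm g x (n + 1) = rcomm (rcomm g x 1) x n := by
  induction n with
  | zero => rfl
  | succ n ih => rw [rcomm, ih]; rfl

theorem IsRightEngelSink.mem_of_frequently {G : Type*} [Group G] {R : Set G} {g x z : G}
    (hR : IsRightEngelSink R g) (h : ∃ᶠ n in atTop, rcomm g x n = z) : z ∈ R := by
  obtain ⟨N, hN⟩ := hR x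
  obtain ⟨n, rfl, hn⟩ := (h.and_eventually (eventually_ge_atTop N)).exists
  exact hN n hn

namespace Subgroup

open scoped IsMulCommutative

variable {G : Type*} [Group G] (H : Subgroup G) [H.Normal] [IsMulCommutative H] (a : G)

def commutatorHom : H →* H :=
  MonoidHom.mk' (fun h => h⁻¹ * MulAut.conjNormal a⁻¹ h) fun x y => by
    simp only [map_mul, mul_inv]
    ac_rfl

@[simp]
theorem coe_commutatorHom (h : H) :
    (H.commutatorHom a h : G) = (h : G)⁻¹ * (a⁻¹ * h * a) := by
  simp [commutatorHom]

theorem commutatorHom_eq_one_iff {h : H} : H.commutatorHom a h = 1 ↔ Commute a h := by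
  rw [← Subtype.coe_inj, coe_commutatorHom, OneMemClass.coe_one, inv_mul_eq_one, mul_assoc,
    eq_inv_mul_iff_mul_eq, Commute, SemiconjBy]

theorem map_range_commutatorHom : (H.commutatorHom a).range.map H.subtype = commSub H a := by
  have hgen : {z : G | ∃ h ∈ H, z = h⁻¹ * (a⁻¹ * h * a)} =
      ((H.commutatorHom a).range.map H.subtype : Set G) := by
    ext z
    constructor
    · rintro ⟨h, hh, rfl⟩
      exact ⟨_, ⟨⟨h, hh⟩, rfl⟩, coe_commutatorHom H a _⟩
    · rintro ⟨_, ⟨h, rfl⟩, rfl⟩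
      exact ⟨h, h.2, coe_commutatorHom H a h⟩
  rw [commSub, hgen, closure_eq]

theorem map_ker_commutatorHom :
    (H.commutatorHom a).ker.map H.subtype = H ⊓ centralizer {a} := by
  have hker : (H.commutatorHom a).ker = (centralizer {a}).subgroupOf H := by
    ext h
    rw [MonoidHom.mem_ker, commutatorHom_eq_one_iff, mem_subgroupOf,
      mem_centralizer_singleton_iff, Commute, SemiconjBy, eq_comm]
  rw [hker, subgroupOf_map_subtype, inf_comm]

theorem disjoint_range_ker_commutatorHom [Finite H] (hcop : (orderOf a).Coprime (Nat.card H)) :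
    Disjoint (H.commutatorHom a).range (H.commutatorHom a).ker := by
  refine disjoint_def.2 ?_
  rintro _ ⟨h, rfl⟩ hx
  set x := H.commutatorHom a h
  have hcomm : Commute a x := (commutatorHom_eq_one_iff H a).1 hx
  have hconj : a⁻¹ * h * a = h * x := by
    rw [coe_commutatorHom, mul_inv_cancel_left]
  have hpow : x ^ orderOf a = 1 := by
    have := conj_pow_eq_mul_pow hcomm hconj (orderOf a)
    rw [pow_orderOf_eq_one, inv_one, one_mul, mul_one, left_eq_mul] at this
    exact_mod_cast this
  exact (Nat.Coprime.pow_left_bijective hcop.symm).injective (by simp [hpow])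

theorem commSub_inf_centralizer_eq_bot [Finite H] (hcop : (orderOf a).Coprime (Nat.card H)) :
    commSub H a ⊓ (H ⊓ centralizer {a}) = ⊥ := by
  rw [← map_range_commutatorHom, ← map_ker_commutatorHom, ← map_inf_eq _ _ _ H.subtype_injective,
    (H.disjoint_range_ker_commutatorHom a hcop).eq_bot, map_bot]

theorem commSub_sup_centralizer_eq_self [Finite H] (hcop : (orderOf a).Coprime (Nat.card H)) :
    commSub H a ⊔ (H ⊓ centralizer {a}) = H := by
  rw [← map_range_commutatorHom, ← map_ker_commutatorHom, ← map_sup,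
    MonoidHom.range_sup_ker_eq_top (H.disjoint_range_ker_commutatorHom a hcop),
    ← MonoidHom.range_eq_map, range_subtype]

theorem rcomm_coe_mul_coe (c b : H) (k : ℕ) :
    rcomm (c : G) (a * b) k = ((H.commutatorHom a)^[k] c : G) := by
  induction k with
  | zero => rfl
  | succ k ih =>
    rw [rcomm, ih, iterate_succ_apply', coe_commutatorHom]
    set d : G := (((H.commutatorHom a)^[k] c : H) : G)
    have hb : (b : G) * (a⁻¹ * d * a) = a⁻¹ * d * a * b :=
      setLike_mul_comm b.2 (‹H.Normal›.conj_mem' _ (Subtype.mem _) a)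
    calc d⁻¹ * (a * b)⁻¹ * d * (a * b) = d⁻¹ * (b : G)⁻¹ * (a⁻¹ * d * a * b) := by group
      _ = d⁻¹ * (a⁻¹ * d * a) := by rw [← hb]; group

theorem rcomm_mul_inv_one (h : H) : rcomm a (a * (h⁻¹ : H)) 1 = H.commutatorHom a h := by
  have hh : (h : G) * (a⁻¹ * h * a) = a⁻¹ * h * a * h :=
    setLike_mul_comm h.2 (‹H.Normal›.conj_mem' _ h.2 a)
  rw [coe_commutatorHom, rcomm, rcomm, InvMemClass.coe_inv]
  calc a⁻¹ * (a * (h : G)⁻¹)⁻¹ * a * (a * (h : G)⁻¹)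
        = (h : G)⁻¹ * (h * (a⁻¹ * h * a)) * (h : G)⁻¹ := by group
    _ = (h : G)⁻¹ * (a⁻¹ * h * a) := by rw [hh]; group

theorem frequently_rcomm_eq_commutatorHom [Finite H] (hcop : (orderOf a).Coprime (Nat.card H))
    (h : H) : ∃ᶠ n in atTop, rcomm a (a * (h⁻¹ : H)) n = H.commutatorHom a h := by
  have hper := frequently_iterate_eq_of_mem_periodicPts <|
    (H.commutatorHom a).mem_periodicPts_of_disjoint (H.disjoint_range_ker_commutatorHom a hcop)
      ⟨h, rfl⟩
  refine (tendsto_add_atTop_nat 1).frequently (hper.mono fun k hk => ?_)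
  rw [rcomm_succ', rcomm_mul_inv_one, rcomm_coe_mul_coe, hk]

theorem commSub_subset_of_isRightEngelSink [Finite H] (hcop : (orderOf a).Coprime (Nat.card H))
    {R : Set G} (hR : IsRightEngelSink R a) : (commSub H a : Set G) ⊆ R := by
  rw [← map_range_commutatorHom]
  rintro _ ⟨_, ⟨h, rfl⟩, rfl⟩
  exact hR.mem_of_frequently (H.frequently_rcomm_eq_commutatorHom a hcop h)

end Subgroup

theorem stmt17_general {G : Type*} [Group G] [Finite G] (H : Subgroup G) (hN : H.Normal)
    (hab : ∀ h₁ ∈ H, ∀ h₂ ∈ H, h₁ * h₂ = h₂ * h₁)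
    (a : G)
    (hcop : Nat.Coprime (orderOf a) (Nat.card H)) :
    (commSub H a ⊓ (H ⊓ Subgroup.centralizer {a}) = ⊥ ∧
        commSub H a ⊔ (H ⊓ Subgroup.centralizer {a}) = H) ∧
      ∀ R : Set G, IsMinRightEngelSink R a → (commSub H a : Set G) ⊆ R := by
  have : IsMulCommutative H := .of_setLike_mul_comm hab
  exact ⟨⟨H.commSub_inf_centralizer_eq_bot a hcop, H.commSub_sup_centralizer_eq_self a hcop⟩,
    fun R hR => H.commSub_subset_of_isRightEngelSink a hcop hR.1⟩

theorem stmt17 {G : Type*} [Group G] [Finite G] (H : Subgroup G) (hN : H.Normal)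
    (hab : ∀ h₁ ∈ H, ∀ h₂ ∈ H, h₁ * h₂ = h₂ * h₁)
    (a : G) (hgen : H ⊔ Subgroup.zpowers a = ⊤)
    (hcop : Nat.Coprime (orderOf a) (Nat.card H)) :
    (commSub H a ⊓ (H ⊓ Subgroup.centralizer {a}) = ⊥ ∧
        commSub H a ⊔ (H ⊓ Subgroup.centralizer {a}) = H) ∧
      ∀ R : Set G, IsMinRightEngelSink R a → (commSub H a : Set G) ⊆ R :=
  stmt17_general H hN hab a hcop
end

section
/- Let G be a finite group, H a normal subgroup, a ∈ G with G = H⟨a⟩ and gcd(|a|,|H|) = 1, and suppose y ∈ H has odd order with y^a = y⁻¹ and a² = 1. Then y belongs to the minimal right Engel sink R(a); in particular if a centralizes R(a), then y = 1. -/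
theorem pow_two_pow_totient_mul_eq_self {M : Type*} [LeftCancelMonoid M] {y : M}
    (hodd : Odd (orderOf y)) (k : ℕ) : y ^ 2 ^ ((orderOf y).totient * k) = y := by
  have h := (Nat.ModEq.pow_totient (Nat.coprime_two_left.mpr hodd)).pow k
  rw [one_pow, ← pow_mul] at h
  exact (pow_eq_pow_iff_modEq.mpr h).trans (pow_one y)

section Inversion

variable {G : Type*} [Group G] {a y : G}

theorem conj_zpow_eq_zpow_neg_of_conj_eq_inv (hinv : a⁻¹ * y * a = y⁻¹) (k : ℤ) :
    a⁻¹ * y ^ k * a = y ^ (-k) := by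
  simpa [hinv, zpow_neg] using (conj_zpow (i := k) (a := a⁻¹) (b := y)).symm

theorem rcomm_one_eq_zpow_of_conj_eq_inv (hinv : a⁻¹ * y * a = y⁻¹) :
    rcomm a (y * a) 1 = y ^ (-2 : ℤ) := by
  -- `a²` centralizes `y`, being the square of an automorphism that inverts `y`
  have hsq : a⁻¹ * (a⁻¹ * y⁻¹ * a) * a = y⁻¹ := by
    rw [show a⁻¹ * y⁻¹ * a = (a⁻¹ * y * a)⁻¹ by group, hinv, inv_inv, hinv]
  calc rcomm a (y * a) 1 = a⁻¹ * (a⁻¹ * y⁻¹ * a) * a * (a⁻¹ * y * a) := by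
        simp only [rcomm]; group
    _ = y ^ (-2 : ℤ) := by rw [hsq, hinv]; group

theorem rcomm_succ_eq_zpow_of_conj_eq_inv (hinv : a⁻¹ * y * a = y⁻¹) (n : ℕ) :
    rcomm a (y * a) (n + 1) = y ^ ((-2 : ℤ) ^ (n + 1)) := by
  induction n with
  | zero => simpa using rcomm_one_eq_zpow_of_conj_eq_inv hinv
  | succ n ih =>
    set e : ℤ := (-2 : ℤ) ^ (n + 1)
    calc rcomm a (y * a) (n + 1 + 1) = (y ^ e)⁻¹ * (a⁻¹ * (y⁻¹ * y ^ e * y) * a) := by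
          simp only [rcomm] at ih ⊢; rw [ih]; group
      _ = y ^ (-e) * y ^ (-e) := by
          rw [show y⁻¹ * y ^ e * y = y ^ e by group, conj_zpow_eq_zpow_neg_of_conj_eq_inv hinv,
            zpow_neg]
      _ = y ^ ((-2 : ℤ) ^ (n + 1 + 1)) := by rw [← zpow_add]; congr 1; ring

theorem eq_one_of_commute_of_conj_eq_inv (hodd : Odd (orderOf y)) (hinv : a⁻¹ * y * a = y⁻¹)
    (hcomm : Commute a y) : y = 1 := by
  have hy : y⁻¹ = y := by rw [← hinv, mul_assoc, ← hcomm.eq, inv_mul_cancel_left]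
  have hy2 : y ^ 2 = 1 := by rw [sq, mul_eq_one_iff_eq_inv, hy]
  exact orderOf_eq_one_iff.mp <|
    hodd.coprime_two_right.eq_one_of_dvd (orderOf_dvd_of_pow_eq_one hy2)

theorem mem_of_isRightEngelSink_of_conj_eq_inv {S : Set G} (hS : IsRightEngelSink S a)
    (hodd : Odd (orderOf y)) (hinv : a⁻¹ * y * a = y⁻¹) : y ∈ S := by
  obtain ⟨N, hN⟩ := hS (y * a)
  obtain ⟨n, hn⟩ : ∃ n, n + 1 = (orderOf y).totient * (2 * (N + 1)) :=
    ⟨_, Nat.succ_pred_eq_of_pos (by positivity [Nat.totient_pos.mpr hodd.pos])⟩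
  have hNn : N ≤ n + 1 := by
    rw [hn]; nlinarith [Nat.totient_pos.mpr hodd.pos]
  have hpow : (-2 : ℤ) ^ (n + 1) = ((2 ^ ((orderOf y).totient * (2 * (N + 1))) : ℕ) : ℤ) := by
    rw [hn, ((even_two_mul (N + 1)).mul_left _).neg_pow]; push_cast; rfl
  have h := hN (n + 1) hNn
  rwa [rcomm_succ_eq_zpow_of_conj_eq_inv hinv, hpow, zpow_natCast,
    pow_two_pow_totient_mul_eq_self hodd] at h

end Inversion

theorem stmt18_general {G : Type*} [Group G]
    (a : G)
    (y : G) (hodd : Odd (orderOf y)) (hinv : a⁻¹ * y * a = y⁻¹)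
    (R : Set G) (hR : IsMinRightEngelSink R a) :
    y ∈ R ∧ ((∀ r ∈ R, a * r = r * a) → y = 1) := by
  have hyR : y ∈ R := mem_of_isRightEngelSink_of_conj_eq_inv hR.1 hodd hinv
  exact ⟨hyR, fun hc => eq_one_of_commute_of_conj_eq_inv hodd hinv (hc y hyR)⟩

theorem stmt18 {G : Type*} [Group G] [Finite G] (H : Subgroup G) (hN : H.Normal)
    (a : G) (hgen : H ⊔ Subgroup.zpowers a = ⊤)
    (hcop : Nat.Coprime (orderOf a) (Nat.card H))
    (ha2 : a * a = 1)
    (y : G) (hy : y ∈ H) (hodd : Odd (orderOf y)) (hinv : a⁻¹ * y * a = y⁻¹)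
    (R : Set G) (hR : IsMinRightEngelSink R a) :
    y ∈ R ∧ ((∀ r ∈ R, a * r = r * a) → y = 1) :=
  stmt18_general a y hodd hinv R hR
end
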